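/- arXiv:2501.11589 — 6 statements merged into one kernel-verified Lean document; each statement's English description precedes it below -/
import Mathlib

section
/- Let $A_d = 1 - \frac{1}{2d}$ for integers $d \geq 1$. Then $\lim_{d\to\infty} \frac{1}{\log d}\int_1^\infty \frac{A_d^x}{x}\,dx = 1$. -/
open Real Filter MeasureTheory Set

lemma aux_integrable {c : ℝ} (hc0 : 0 < c) :
    IntegrableOn (fun x : ℝ => Real.exp (-(c * x)) / x) (Set.Ioi (1:ℝ)) := by
  apply Integrable.mono' (exp_neg_integrableOn_Ioi 1 hc0)
  · exact ((Real.measurable_exp.comp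
      ((measurable_const.mul measurable_id).neg)).div measurable_id).aestronglyMeasurable
  · filter_upwards [ae_restrict_mem measurableSet_Ioi] with x hx
    have hx1 : (1:ℝ) ≤ x := le_of_lt hx
    rw [Real.norm_eq_abs, abs_of_nonneg (by positivity), neg_mul]
    exact div_le_self (Real.exp_nonneg _) hx1

lemma aux_core {c : ℝ} (hc0 : 0 < c) (hc1 : c ≤ 1) :
    Real.log (1/c) - 1 ≤ (∫ x in Set.Ioi (1:ℝ), Real.exp (-(c * x)) / x) ∧
      (∫ x in Set.Ioi (1:ℝ), Real.exp (-(c * x)) / x) ≤ Real.log (1/c) + 1 := by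
  set b : ℝ := 1 / c with hbdef
  have hb1 : 1 ≤ b := (le_div_iff₀ hc0).2 (by linarith)
  have hbpos : 0 < b := lt_of_lt_of_le one_pos hb1
  have hcb : c * b = 1 := by rw [hbdef, mul_one_div_cancel hc0.ne']
  have hint : IntegrableOn (fun x : ℝ => Real.exp (-(c * x)) / x) (Set.Ioi (1:ℝ)) :=
    aux_integrable hc0
  have hint1 : IntegrableOn (fun x : ℝ => Real.exp (-(c * x)) / x) (Set.Ioc (1:ℝ) b) :=
    hint.mono_set Set.Ioc_subset_Ioi_self
  have hint2 : IntegrableOn (fun x : ℝ => Real.exp (-(c * x)) / x) (Set.Ioi b) :=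
    hint.mono_set (Set.Ioi_subset_Ioi hb1)
  have hsplit : (∫ x in Set.Ioi (1:ℝ), Real.exp (-(c * x)) / x)
      = (∫ x in Set.Ioc (1:ℝ) b, Real.exp (-(c * x)) / x)
        + ∫ x in Set.Ioi b, Real.exp (-(c * x)) / x := by
    rw [← Set.Ioc_union_Ioi_eq_Ioi hb1]
    exact MeasureTheory.setIntegral_union Set.Ioc_disjoint_Ioi_same measurableSet_Ioi hint1 hint2
  -- integrability of 1/x on Ioc 1 b
  have hone_div_int : IntegrableOn (fun x : ℝ => 1 / x) (Set.Ioc (1:ℝ) b) := by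
    apply (ContinuousOn.integrableOn_Icc ?_).mono_set Set.Ioc_subset_Icc_self
    exact continuousOn_const.div continuousOn_id
      (fun x hx => by rcases hx with ⟨h1, _⟩; positivity)
  have h0nem : (0:ℝ) ∉ Set.uIcc 1 b := by
    rw [Set.uIcc_of_le hb1]
    rintro ⟨h1, _⟩; linarith
  have hlogb : (∫ x in Set.Ioc (1:ℝ) b, 1 / x) = Real.log b := by
    rw [← intervalIntegral.integral_of_le hb1, integral_one_div h0nem, div_one]
  -- lower bound
  have hlow : Real.log (1/c) - 1 ≤ ∫ x in Set.Ioi (1:ℝ), Real.exp (-(c * x)) / x := by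
    have hg_int : IntegrableOn (fun x : ℝ => 1 / x - c) (Set.Ioc (1:ℝ) b) :=
      hone_div_int.sub (integrableOn_const measure_Ioc_lt_top.ne)
    have hmono : (∫ x in Set.Ioc (1:ℝ) b, (1 / x - c))
        ≤ ∫ x in Set.Ioc (1:ℝ) b, Real.exp (-(c * x)) / x := by
      apply setIntegral_mono_on hg_int hint1 measurableSet_Ioc
      intro x hx
      have hx0 : (0:ℝ) < x := lt_trans one_pos hx.1
      have h1 : 1 - c * x ≤ Real.exp (-(c * x)) := by
        have := Real.add_one_le_exp (-(c * x)); linarith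
      have : (1 - c * x) / x ≤ Real.exp (-(c * x)) / x := by gcongr
      calc 1 / x - c = (1 - c * x) / x := by field_simp
        _ ≤ Real.exp (-(c * x)) / x := this
    have hval : (∫ x in Set.Ioc (1:ℝ) b, (1 / x - c)) = Real.log b - c * (b - 1) := by
      rw [integral_sub hone_div_int (integrableOn_const measure_Ioc_lt_top.ne), hlogb,
        setIntegral_const]
      have : volume.real (Set.Ioc (1:ℝ) b) = b - 1 := by
        rw [measureReal_def, Real.volume_Ioc, ENNReal.toReal_ofReal (by linarith)]
      rw [this, smul_eq_mul]; ring
    have htail : 0 ≤ ∫ x in Set.Ioi b, Real.exp (-(c * x)) / x :=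
      setIntegral_nonneg measurableSet_Ioi fun x hx => by
        have : (0:ℝ) < x := lt_trans hbpos hx
        positivity
    have hcb1 : c * (b - 1) ≤ 1 := by nlinarith [hc0.le]
    rw [hsplit]
    linarith [hmono, hval, htail, hcb1]
  -- upper bound
  have hup : (∫ x in Set.Ioi (1:ℝ), Real.exp (-(c * x)) / x) ≤ Real.log (1/c) + 1 := by
    have hmid : (∫ x in Set.Ioc (1:ℝ) b, Real.exp (-(c * x)) / x) ≤ Real.log b := by
      rw [← hlogb]
      apply setIntegral_mono_on hint1 hone_div_int measurableSet_Ioc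
      intro x hx
      have hx0 : (0:ℝ) < x := lt_trans one_pos hx.1
      have hexple : Real.exp (-(c * x)) ≤ 1 := by
        apply Real.exp_le_one_iff.2
        nlinarith [hx.1]
      gcongr
    have htail_int : IntegrableOn (fun x : ℝ => c * Real.exp (-(c * x))) (Set.Ioi b) := by
      have := (exp_neg_integrableOn_Ioi b hc0).const_mul c
      simp only [neg_mul] at this; exact this
    have htail_mono : (∫ x in Set.Ioi b, Real.exp (-(c * x)) / x)
        ≤ ∫ x in Set.Ioi b, c * Real.exp (-(c * x)) := by
      apply setIntegral_mono_on hint2 htail_int measurableSet_Ioi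
      intro x hx
      have hx0 : (0:ℝ) < x := lt_trans hbpos hx
      have h1 : Real.exp (-(c * x)) / x ≤ Real.exp (-(c * x)) / b := by gcongr; exact hx.le
      have h2 : Real.exp (-(c * x)) / b = c * Real.exp (-(c * x)) := by
        rw [hbdef]; field_simp
      linarith [h1, h2.le]
    have htail_val : (∫ x in Set.Ioi b, c * Real.exp (-(c * x))) = Real.exp (-(c * b)) := by
      rw [integral_const_mul]
      have := integral_comp_mul_left_Ioi (fun x => Real.exp (-x)) b hc0
      simp only [smul_eq_mul] at this
      rw [this, integral_exp_neg_Ioi]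
      field_simp
    have hle1 : Real.exp (-(c * b)) ≤ 1 := Real.exp_le_one_iff.2 (by rw [hcb]; norm_num)
    rw [hsplit]
    linarith [hmid, htail_mono, htail_val ▸ htail_mono, hle1]
  exact ⟨hlow, hup⟩

lemma key_bounds (d : ℕ) (hd : 2 ≤ d) :
    Real.log d - 1 ≤ (∫ x in Set.Ioi (1 : ℝ), ((1 - 1 / (2 * (d : ℝ))) ^ x) / x) ∧
      (∫ x in Set.Ioi (1 : ℝ), ((1 - 1 / (2 * (d : ℝ))) ^ x) / x) ≤ Real.log d + 2 := by
  set D : ℝ := (d : ℝ) with hDdef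
  have hD : (2:ℝ) ≤ D := by rw [hDdef]; exact_mod_cast hd
  set a : ℝ := 1 - 1 / (2 * D) with hadef
  have h2D : (4:ℝ) ≤ 2 * D := by linarith
  have hsmall : 1 / (2 * D) ≤ 1/4 := by
    apply one_div_le_one_div_of_le <;> linarith
  have hsmall0 : 0 < 1 / (2 * D) := by positivity
  have hapos : 0 < a := by rw [hadef]; linarith
  have ha1 : a < 1 := by rw [hadef]; linarith
  have ha_half : (1:ℝ)/2 ≤ a := by rw [hadef]; linarith
  set c : ℝ := -Real.log a with hcdef
  have hc0 : 0 < c := by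
    have := Real.log_neg hapos ha1
    rw [hcdef]; linarith
  have hcu : c ≤ a⁻¹ - 1 := by
    have := Real.log_le_sub_one_of_pos (inv_pos.2 hapos)
    rw [Real.log_inv] at this
    rw [hcdef]; linarith
  have hcl : 1 / (2 * D) ≤ c := by
    have := Real.log_le_sub_one_of_pos hapos
    rw [hcdef, hadef]; rw [hadef] at this; linarith
  have hcD : c ≤ 1 / D := by
    have h1 : a⁻¹ - 1 = (1 - a) / a := by field_simp
    have h2 : (1 - a) / a ≤ (1 - a) / (1/2) := by
      apply div_le_div_of_nonneg_left (by linarith) (by norm_num) ha_half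
    have h3 : (1 - a) / (1/2) = 1 / D := by
      rw [hadef]; field_simp; ring
    linarith
  have hc1 : c ≤ 1 := by
    have : (1:ℝ)/D ≤ 1/2 := by apply one_div_le_one_div_of_le <;> linarith
    linarith
  have hkey : ∀ x : ℝ, a ^ x = Real.exp (-(c * x)) := by
    intro x
    rw [Real.rpow_def_of_pos hapos]
    congr 1
    rw [hcdef]; ring
  have hIeq : (∫ x in Set.Ioi (1 : ℝ), a ^ x / x)
      = ∫ x in Set.Ioi (1 : ℝ), Real.exp (-(c * x)) / x := by
    simp only [hkey]
  obtain ⟨hlow, hup⟩ := aux_core hc0 hc1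
  -- bounds on log (1/c)
  have hcinv_lb : D ≤ 1/c := by
    have := one_div_le_one_div_of_le hc0 hcD
    rwa [one_div_one_div] at this
  have hcinv_ub : 1/c ≤ 2 * D := by
    have := one_div_le_one_div_of_le hsmall0 hcl
    rwa [one_div_one_div] at this
  have hlog_lb : Real.log D ≤ Real.log (1/c) := Real.log_le_log (by linarith) hcinv_lb
  have hlog_ub : Real.log (1/c) ≤ Real.log D + 1 := by
    have h1 : Real.log (1/c) ≤ Real.log (2 * D) := Real.log_le_log (by positivity) hcinv_ub
    have h2 : Real.log (2 * D) = Real.log 2 + Real.log D :=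
      Real.log_mul (by norm_num) (by linarith)
    have h3 : Real.log 2 ≤ 1 := by linarith [Real.log_le_sub_one_of_pos (by norm_num : (0:ℝ) < 2)]
    linarith
  rw [hIeq]
  constructor
  · linarith
  · linarith

theorem stmt0 :
    Tendsto (fun d : ℕ =>
        (∫ x in Set.Ioi (1 : ℝ), ((1 - 1 / (2 * (d : ℝ))) ^ x) / x) / Real.log d)
      atTop (nhds 1) := by
  have hlog : Tendsto (fun d : ℕ => Real.log d) atTop atTop :=
    Real.tendsto_log_atTop.comp tendsto_natCast_atTop_atTop
  have hinv : Tendsto (fun d : ℕ => 1 / Real.log d) atTop (nhds 0) := by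
    simpa using (by exact hlog.inv_tendsto_atTop : Tendsto (fun d : ℕ => (Real.log d)⁻¹) atTop (nhds 0))
  have hlower : Tendsto (fun d : ℕ => 1 - 1 / Real.log d) atTop (nhds 1) := by
    simpa using tendsto_const_nhds.sub hinv
  have hupper : Tendsto (fun d : ℕ => 1 + 2 / Real.log d) atTop (nhds 1) := by
    have : Tendsto (fun d : ℕ => 2 / Real.log d) atTop (nhds 0) := by
      have := hinv.const_mul (2:ℝ)
      simpa [div_eq_mul_inv] using this
    simpa using tendsto_const_nhds.add this
  apply tendsto_of_tendsto_of_tendsto_of_le_of_le' hlower hupper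
  · -- lower bound eventually
    filter_upwards [eventually_ge_atTop 2] with d hd
    obtain ⟨h1, _⟩ := key_bounds d hd
    have hlogpos : (0:ℝ) < Real.log d :=
      Real.log_pos (by exact_mod_cast Nat.lt_of_lt_of_le one_lt_two hd)
    rw [show (1:ℝ) - 1 / Real.log d = (Real.log d - 1) / Real.log d by field_simp]
    gcongr
  · filter_upwards [eventually_ge_atTop 2] with d hd
    obtain ⟨_, h2⟩ := key_bounds d hd
    have hlogpos : (0:ℝ) < Real.log d :=
      Real.log_pos (by exact_mod_cast Nat.lt_of_lt_of_le one_lt_two hd)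
    rw [show (1:ℝ) + 2 / Real.log d = (Real.log d + 2) / Real.log d by field_simp]
    gcongr
end

section
/- Let $A_d = 1 - \frac{1}{2d}$. Then $\lim_{d\to\infty} \frac{1}{(\log d)^2} \int_1^\infty \frac{2}{x} \left( \int_{x-1}^\infty \frac{A_d^{y}}{y}\,dy \right) dx = 1$, where the inner integral over $y$ is taken over $y \geq \max(x-1, 1)$ (equivalently, interpret $\int_{x-1}^\infty \frac{A_d^y}{y}dy$ with lower limit $\max(x-1,1)$). -/
open Real Filter MeasureTheory Set

lemma my_integral_exp_neg_mul_Ioi {b : ℝ} (hb : 0 < b) (a : ℝ) :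
    ∫ x in Ioi a, Real.exp (-b * x) = Real.exp (-b * a) / b := by
  have h : ∀ x ∈ Ici a, HasDerivAt (fun x => -Real.exp (-b * x) / b) (Real.exp (-b * x)) x := by
    intro x _
    have h1 : HasDerivAt (fun x : ℝ => -b * x) (-b) x := by simpa using (hasDerivAt_id x).const_mul (-b)
    have h2 := (h1.exp).neg.div_const b
    refine h2.congr_deriv ?_
    field_simp
  have hint : IntegrableOn (fun x => Real.exp (-b * x)) (Ioi a) :=
    exp_neg_integrableOn_Ioi a hb
  have hlim : Tendsto (fun x => -Real.exp (-b * x) / b) atTop (nhds 0) := by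
    have h1 : Tendsto (fun x : ℝ => -b * x) atTop atBot :=
      tendsto_neg_atBot_iff.mpr ((tendsto_const_mul_atTop_of_pos hb).mpr tendsto_id) |>.congr
        (by intro x; simp)
    have := (Real.tendsto_exp_atBot.comp h1).neg.div_const b
    simpa using this
  have := integral_Ioi_of_hasDerivAt_of_tendsto' h hint hlim
  rw [this]; field_simp; ring

open Real Filter MeasureTheory Set

noncomputable def gg (lam : ℝ) : ℝ → ℝ := fun y => Real.exp (-lam * y) / y

lemma gg_contOn (lam : ℝ) : ContinuousOn (gg lam) {y : ℝ | y ≠ 0} :=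
  ContinuousOn.div
    (Real.continuous_exp.comp (continuous_const.mul continuous_id)).continuousOn
    continuousOn_id (fun _ hy => hy)

lemma gg_nonneg (lam : ℝ) {y : ℝ} (hy : 0 < y) : 0 ≤ gg lam y :=
  div_nonneg (Real.exp_pos _).le hy.le

lemma gg_aesm (lam m : ℝ) (hm : 0 < m) :
    AEStronglyMeasurable (gg lam) (volume.restrict (Ioi m)) :=
  ((gg_contOn lam).mono (fun y hy => ne_of_gt (hm.trans hy))).aestronglyMeasurable
    measurableSet_Ioi

lemma gg_int {lam : ℝ} (hlam : 0 < lam) {m : ℝ} (hm : 1 ≤ m) :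
    IntegrableOn (gg lam) (Ioi m) := by
  apply Integrable.mono (exp_neg_integrableOn_Ioi m hlam)
    (gg_aesm lam m (lt_of_lt_of_le one_pos hm))
  filter_upwards [ae_restrict_mem measurableSet_Ioi] with y hy
  have hy1 : (1 : ℝ) ≤ y := hm.trans (le_of_lt hy)
  rw [Real.norm_of_nonneg (gg_nonneg lam (lt_of_lt_of_le one_pos hy1)),
    Real.norm_of_nonneg (Real.exp_pos _).le, gg]
  exact div_le_self (Real.exp_pos _).le hy1

lemma gg_int_Ioc {lam : ℝ} (hlam : 0 < lam) {m S : ℝ} (hm : 1 ≤ m) :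
    IntegrableOn (gg lam) (Ioc m S) := by
  rcases le_or_gt m S with h | h
  · exact (gg_int hlam hm).mono_set (Ioc_subset_Ioi_self)
  · simp [Ioc_eq_empty (not_lt.mpr h.le)]

lemma one_div_int {m S : ℝ} (hm : 0 < m) : IntegrableOn (fun y : ℝ => 1 / y) (Ioc m S) := by
  rcases le_or_gt m S with h | h
  · have : IntervalIntegrable (fun y : ℝ => 1 / y) volume m S :=
      intervalIntegral.intervalIntegrable_one_div (fun y hy => by
        rcases hy with ⟨h1, h2⟩
        rw [min_eq_left h] at h1
        exact ne_of_gt (lt_of_lt_of_le hm h1)) continuousOn_id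
    exact this.1
  · simp [Ioc_eq_empty (not_lt.mpr h.le)]

lemma integral_one_div_Ioc {m S : ℝ} (hm : 0 < m) (h : m ≤ S) :
    ∫ y in Ioc m S, (1 : ℝ) / y = Real.log S - Real.log m := by
  rw [← intervalIntegral.integral_of_le h, integral_one_div, Real.log_div (ne_of_gt (lt_of_lt_of_le hm h)) (ne_of_gt hm)]
  intro h0
  rcases h0 with ⟨h1, _⟩
  rw [min_eq_left h] at h1
  exact absurd h1 (not_le.mpr hm)

lemma inner_le_tail {lam : ℝ} (hlam : 0 < lam) {m : ℝ} (hm : 1 ≤ m) :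
    ∫ y in Ioi m, gg lam y ≤ Real.exp (-lam * m) / (lam * m) := by
  have hm0 : (0:ℝ) < m := lt_of_lt_of_le one_pos hm
  have h1 : ∫ y in Ioi m, gg lam y ≤ ∫ y in Ioi m, Real.exp (-lam * y) / m := by
    apply setIntegral_mono_on (gg_int hlam hm)
      ((exp_neg_integrableOn_Ioi m hlam).div_const m) measurableSet_Ioi
    intro y hy
    rw [gg]
    exact div_le_div_of_nonneg_left (Real.exp_pos _).le hm0 (le_of_lt hy) |>.trans_eq rfl
  calc ∫ y in Ioi m, gg lam y ≤ ∫ y in Ioi m, Real.exp (-lam * y) / m := h1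
    _ = (∫ y in Ioi m, Real.exp (-lam * y)) / m := by rw [integral_div]
    _ = Real.exp (-lam * m) / lam / m := by rw [my_integral_exp_neg_mul_Ioi hlam]
    _ = Real.exp (-lam * m) / (lam * m) := by ring

lemma inner_split_le {lam : ℝ} (hlam : 0 < lam) {m S : ℝ} (hm : 1 ≤ m) (hmS : m ≤ S) :
    ∫ y in Ioi m, gg lam y ≤ (Real.log S - Real.log m) + 1 / (lam * S) := by
  have hm0 : (0:ℝ) < m := lt_of_lt_of_le one_pos hm
  have hS1 : (1:ℝ) ≤ S := hm.trans hmS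
  have hsplit : ∫ y in Ioi m, gg lam y
      = (∫ y in Ioc m S, gg lam y) + ∫ y in Ioi S, gg lam y := by
    rw [← Ioc_union_Ioi_eq_Ioi hmS]
    exact setIntegral_union ((Set.Iic_disjoint_Ioi le_rfl).mono_left Ioc_subset_Iic_self)
      measurableSet_Ioi (gg_int_Ioc hlam hm) (gg_int hlam hS1)
  have h1 : ∫ y in Ioc m S, gg lam y ≤ Real.log S - Real.log m := by
    rw [← integral_one_div_Ioc hm0 hmS]
    apply setIntegral_mono_on (gg_int_Ioc hlam hm) (one_div_int hm0) measurableSet_Ioc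
    intro y hy
    rw [gg]
    apply div_le_div_of_nonneg_left ?_ ?_ le_rfl |>.trans ?_
    · exact (Real.exp_pos _).le
    · exact hm0.trans hy.1
    rw [div_le_div_iff₀ (hm0.trans hy.1) (hm0.trans hy.1)]
    have : Real.exp (-lam * y) ≤ 1 := Real.exp_le_one_iff.mpr (by nlinarith [hm0.trans hy.1, hlam])
    nlinarith [hm0.trans hy.1]
  have h2 : ∫ y in Ioi S, gg lam y ≤ 1 / (lam * S) := by
    calc ∫ y in Ioi S, gg lam y ≤ Real.exp (-lam * S) / (lam * S) := inner_le_tail hlam hS1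
      _ ≤ 1 / (lam * S) := by
          apply div_le_div_of_nonneg_right ?_ (by positivity) |>.trans_eq rfl
          exact Real.exp_le_one_iff.mpr (by nlinarith [hlam, hS1])
  linarith [hsplit, h1, h2]

lemma inner_ge {lam : ℝ} (hlam : 0 < lam) {m T : ℝ} (hm : 1 ≤ m) (hmT : m ≤ T) :
    Real.exp (-lam * T) * (Real.log T - Real.log m) ≤ ∫ y in Ioi m, gg lam y := by
  have hm0 : (0:ℝ) < m := lt_of_lt_of_le one_pos hm
  have step1 : ∫ y in Ioc m T, gg lam y ≤ ∫ y in Ioi m, gg lam y := by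
    apply setIntegral_mono_set (gg_int hlam hm) ?_ (HasSubset.Subset.eventuallyLE Ioc_subset_Ioi_self)
    filter_upwards [ae_restrict_mem measurableSet_Ioi] with y hy
    exact gg_nonneg lam (hm0.trans hy)
  have step2 : Real.exp (-lam * T) * (Real.log T - Real.log m) ≤ ∫ y in Ioc m T, gg lam y := by
    rw [← integral_one_div_Ioc hm0 hmT, ← MeasureTheory.integral_const_mul]
    apply setIntegral_mono_on ((one_div_int hm0).const_mul _) (gg_int_Ioc hlam hm) measurableSet_Ioc
    intro y hy
    rw [gg]
    rw [mul_one_div, div_le_div_iff₀ (hm0.trans hy.1) (hm0.trans hy.1)]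
    have : Real.exp (-lam * T) ≤ Real.exp (-lam * y) :=
      Real.exp_le_exp.mpr (by nlinarith [hy.2, hlam])
    nlinarith [hm0.trans hy.1]
  linarith

lemma comp_contOn (C X : ℝ) (hX : 1 ≤ X) :
    ContinuousOn (fun x : ℝ => (2/x) * (C - Real.log x)) (uIcc 1 X) := by
  rw [uIcc_of_le hX]
  have h0 : ∀ x ∈ Icc (1:ℝ) X, x ≠ 0 := fun x hx => ne_of_gt (lt_of_lt_of_le one_pos hx.1)
  exact (continuousOn_const.div continuousOn_id h0).mul
    (continuousOn_const.sub (Real.continuousOn_log.mono (fun x hx => h0 x hx)))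

lemma comp_int (C X : ℝ) (hX : 1 ≤ X) :
    IntegrableOn (fun x : ℝ => (2/x) * (C - Real.log x)) (Ioc 1 X) :=
  ((comp_contOn C X hX).intervalIntegrable).1

lemma outer_eval (C X : ℝ) (hX : 1 ≤ X) :
    ∫ x in Ioc (1:ℝ) X, (2/x) * (C - Real.log x)
      = 2*C*Real.log X - (Real.log X)^2 := by
  rw [← intervalIntegral.integral_of_le hX]
  have key : ∀ x ∈ uIcc (1:ℝ) X,
      HasDerivAt (fun x => 2*C*Real.log x - (Real.log x)^2) ((2/x) * (C - Real.log x)) x := by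
    intro x hx
    rw [uIcc_of_le hX] at hx
    have hx0 : x ≠ 0 := ne_of_gt (lt_of_lt_of_le one_pos hx.1)
    have h1 : HasDerivAt Real.log x⁻¹ x := Real.hasDerivAt_log hx0
    have h2 := (h1.const_mul (2*C)).sub (h1.pow 2)
    refine h2.congr_deriv ?_
    have : (0:ℝ) < x := lt_of_lt_of_le one_pos hx.1
    field_simp
    ring
  rw [intervalIntegral.integral_eq_sub_of_hasDerivAt key ((comp_contOn C X hX).intervalIntegrable)]
  simp [Real.log_one]

lemma inner_nonneg (lam : ℝ) {m : ℝ} (hm : 0 < m) : 0 ≤ ∫ y in Ioi m, gg lam y := by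
  apply setIntegral_nonneg measurableSet_Ioi
  exact fun y hy => gg_nonneg lam (hm.trans hy)

lemma H_antitone {lam : ℝ} (hlam : 0 < lam) :
    Antitone (fun x : ℝ => ∫ y in Ioi (max (x-1) 1), gg lam y) := by
  intro a b hab
  apply setIntegral_mono_set (gg_int hlam (le_max_right _ 1)) ?_
    (HasSubset.Subset.eventuallyLE (Ioi_subset_Ioi (max_le_max (by linarith) le_rfl)))
  filter_upwards [ae_restrict_mem measurableSet_Ioi] with y hy
  exact gg_nonneg lam (lt_of_lt_of_le one_pos ((le_max_right _ 1).trans hy.le))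

lemma F_aesm {lam : ℝ} (hlam : 0 < lam) (s : Set ℝ) :
    AEStronglyMeasurable (fun x : ℝ => (2/x) * ∫ y in Ioi (max (x-1) 1), gg lam y)
      (volume.restrict s) := by
  apply Measurable.aestronglyMeasurable
  exact (measurable_const.div measurable_id).mul (H_antitone hlam).measurable

lemma F_le_exp {lam : ℝ} (hlam : 0 < lam) {x : ℝ} (hx : 1 < x) :
    (2/x) * ∫ y in Ioi (max (x-1) 1), gg lam y
      ≤ (2/lam) * Real.exp lam * Real.exp (-lam * x) := by
  have hm1 : (1:ℝ) ≤ max (x-1) 1 := le_max_right _ _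
  have hm0 : (0:ℝ) < max (x-1) 1 := lt_of_lt_of_le one_pos hm1
  have h1 : ∫ y in Ioi (max (x-1) 1), gg lam y
      ≤ Real.exp (-lam * (x-1)) / lam := by
    calc ∫ y in Ioi (max (x-1) 1), gg lam y
        ≤ Real.exp (-lam * max (x-1) 1) / (lam * max (x-1) 1) := inner_le_tail hlam hm1
      _ ≤ Real.exp (-lam * (x-1)) / lam := by
          apply div_le_div₀ (Real.exp_pos _).le
          · exact Real.exp_le_exp.mpr (by nlinarith [le_max_left (x-1) 1])
          · exact hlam
          · nlinarith
  calc (2/x) * ∫ y in Ioi (max (x-1) 1), gg lam y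
      ≤ (2/x) * (Real.exp (-lam * (x-1)) / lam) := by
        apply mul_le_mul_of_nonneg_left h1 (by positivity)
    _ ≤ 2 * (Real.exp (-lam * (x-1)) / lam) := by
        apply mul_le_mul_of_nonneg_right ?_ (by positivity)
        rw [div_le_iff₀ (by linarith)]
        nlinarith
    _ = (2/lam) * Real.exp lam * Real.exp (-lam * x) := by
        rw [mul_assoc, ← Real.exp_add]
        ring_nf

lemma F_int {lam : ℝ} (hlam : 0 < lam) :
    IntegrableOn (fun x : ℝ => (2/x) * ∫ y in Ioi (max (x-1) 1), gg lam y) (Ioi 1) := by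
  apply Integrable.mono ((exp_neg_integrableOn_Ioi 1 hlam).const_mul ((2/lam) * Real.exp lam))
    (F_aesm hlam _)
  filter_upwards [ae_restrict_mem measurableSet_Ioi] with x hx
  have hx1 : (1:ℝ) < x := hx
  have hF0 : 0 ≤ (2/x) * ∫ y in Ioi (max (x-1) 1), gg lam y := by
    apply mul_nonneg (by positivity)
    exact inner_nonneg lam (lt_of_lt_of_le one_pos (le_max_right _ 1))
  rw [Real.norm_of_nonneg hF0, Real.norm_of_nonneg (by positivity)]
  exact F_le_exp hlam hx1

set_option maxHeartbeats 2000000 in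
lemma main_bounds {D : ℝ} (hD : 100 ≤ D) {lam : ℝ}
    (hlamdef : lam = -Real.log (1 - 1/(2*D))) :
    (1 - 1/Real.log D) * (Real.log D - Real.log (Real.log D))^2
        ≤ (∫ x in Ioi (1:ℝ), (2/x) * ∫ y in Ioi (max (x-1) 1), gg lam y) ∧
    (∫ x in Ioi (1:ℝ), (2/x) * ∫ y in Ioi (max (x-1) 1), gg lam y)
        ≤ (Real.log D + Real.log (Real.log D) + (2*Real.log 2 + 1))^2 + 2 := by
  have hD0 : (0:ℝ) < D := by linarith
  have hl1 : 1 < Real.log D := by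
    rw [Real.lt_log_iff_exp_lt hD0]
    calc Real.exp 1 < 2.7182818286 := Real.exp_one_lt_d9
      _ < 100 := by norm_num
      _ ≤ D := hD
  have hl0 : 0 < Real.log D := by linarith
  have h2D : (1:ℝ)/(2*D) ≤ 1/200 := by
    apply one_div_le_one_div_of_le <;> linarith
  have h2D0 : (0:ℝ) < 1/(2*D) := by positivity
  have hA0 : (0:ℝ) < 1 - 1/(2*D) := by linarith
  have hA1 : 1 - 1/(2*D) < 1 := by linarith
  have hlam : 0 < lam := by
    rw [hlamdef]; exact neg_pos.mpr (Real.log_neg hA0 hA1)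
  have hlam_ge : 1/(2*D) ≤ lam := by
    rw [hlamdef]
    have := Real.log_le_sub_one_of_pos hA0
    linarith
  have hlam_le : lam ≤ 1/D := by
    have h1 : Real.log (1 - 1/(2*D))⁻¹ ≤ (1 - 1/(2*D))⁻¹ - 1 :=
      Real.log_le_sub_one_of_pos (inv_pos.mpr hA0)
    rw [Real.log_inv] at h1
    have h2 : (1 - 1/(2*D))⁻¹ ≤ 1 + 1/D := by
      rw [inv_le_iff_one_le_mul₀ hA0]
      have e : (1 + 1/D) * (1 - 1/(2*D)) - 1 = (D - 1)/(2*D^2) := by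
        field_simp; ring
      nlinarith [div_nonneg (by linarith : (0:ℝ) ≤ D - 1) (by positivity : (0:ℝ) ≤ 2*D^2)]
    rw [hlamdef]
    linarith
  set T : ℝ := D / Real.log D with hTdef
  set S : ℝ := 2*D*Real.log D with hSdef
  have hT1 : 1 < T := by
    rw [hTdef, lt_div_iff₀ hl0]
    have := Real.log_le_sub_one_of_pos hD0
    linarith
  have hT0 : 0 < T := by linarith
  have hS1 : (1:ℝ) ≤ S := by nlinarith
  have hSlam : Real.log D ≤ S * lam := by
    have e1 : 2*D*Real.log D * (1/(2*D)) = Real.log D := by field_simp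
    nlinarith [mul_le_mul_of_nonneg_left hlam_ge (by positivity : (0:ℝ) ≤ 2*D*Real.log D)]
  have hexpS : Real.exp (-lam * S) ≤ 1/D := by
    have h1 : -lam * S ≤ -Real.log D := by nlinarith
    calc Real.exp (-lam * S) ≤ Real.exp (-Real.log D) := Real.exp_le_exp.mpr h1
      _ = 1/D := by rw [Real.exp_neg, Real.exp_log hD0, one_div]
  have hlamT : lam * T ≤ 1/Real.log D := by
    have h1 : lam * T ≤ (1/D) * T := mul_le_mul_of_nonneg_right hlam_le hT0.le
    have e1 : (1/D) * T = 1/Real.log D := by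
      rw [hTdef]; field_simp
    linarith
  constructor
  · -- lower bound
    have stepA : ∫ x in Ioc (1:ℝ) T, (2/x) * ∫ y in Ioi (max (x-1) 1), gg lam y
        ≤ ∫ x in Ioi (1:ℝ), (2/x) * ∫ y in Ioi (max (x-1) 1), gg lam y := by
      apply setIntegral_mono_set (F_int hlam) ?_
        (HasSubset.Subset.eventuallyLE Ioc_subset_Ioi_self)
      filter_upwards [ae_restrict_mem measurableSet_Ioi] with x hx
      have hx1 : (1:ℝ) < x := hx
      exact mul_nonneg (div_nonneg (by norm_num) (by linarith))
        (inner_nonneg lam (lt_of_lt_of_le one_pos (le_max_right _ 1)))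
    have stepB : ∫ x in Ioc (1:ℝ) T, Real.exp (-lam*T) * ((2/x) * (Real.log T - Real.log x))
        ≤ ∫ x in Ioc (1:ℝ) T, (2/x) * ∫ y in Ioi (max (x-1) 1), gg lam y := by
      apply setIntegral_mono_on ((comp_int (Real.log T) T hT1.le).const_mul _)
        ((F_int hlam).mono_set Ioc_subset_Ioi_self) measurableSet_Ioc
      intro x hx
      have hx1 : (1:ℝ) < x := hx.1
      have hm1 : (1:ℝ) ≤ max (x-1) 1 := le_max_right _ _
      have hmx : max (x-1) 1 ≤ x := max_le (by linarith) hx1.le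
      have hmT : max (x-1) 1 ≤ T := hmx.trans hx.2
      have hlog : Real.log (max (x-1) 1) ≤ Real.log x :=
        Real.log_le_log (lt_of_lt_of_le one_pos hm1) hmx
      have h1 := inner_ge hlam hm1 hmT
      have h2 : Real.exp (-lam*T) * (Real.log T - Real.log x)
          ≤ ∫ y in Ioi (max (x-1) 1), gg lam y := by
        refine le_trans ?_ h1
        apply mul_le_mul_of_nonneg_left (by linarith) (Real.exp_pos _).le
      calc Real.exp (-lam*T) * ((2/x) * (Real.log T - Real.log x))
          = (2/x) * (Real.exp (-lam*T) * (Real.log T - Real.log x)) := by ring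
        _ ≤ (2/x) * ∫ y in Ioi (max (x-1) 1), gg lam y :=
            mul_le_mul_of_nonneg_left h2 (by positivity)
    have stepC : ∫ x in Ioc (1:ℝ) T, Real.exp (-lam*T) * ((2/x) * (Real.log T - Real.log x))
        = Real.exp (-lam*T) * (Real.log T)^2 := by
      rw [MeasureTheory.integral_const_mul, outer_eval (Real.log T) T hT1.le]
      ring
    have stepD : (1 - 1/Real.log D) * (Real.log T)^2
        ≤ Real.exp (-lam*T) * (Real.log T)^2 := by
      apply mul_le_mul_of_nonneg_right ?_ (sq_nonneg _)
      have := Real.add_one_le_exp (-lam*T)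
      linarith
    have hlogT : Real.log T = Real.log D - Real.log (Real.log D) := by
      rw [hTdef, Real.log_div (ne_of_gt hD0) (ne_of_gt hl0)]
    rw [← hlogT]
    linarith
  · -- upper bound
    set X : ℝ := S + 1 with hXdef
    set C : ℝ := Real.log S + Real.log 2 + 1 with hCdef
    have hX1 : (1:ℝ) < X := by linarith
    have hsplit : ∫ x in Ioi (1:ℝ), (2/x) * ∫ y in Ioi (max (x-1) 1), gg lam y
        = (∫ x in Ioc (1:ℝ) X, (2/x) * ∫ y in Ioi (max (x-1) 1), gg lam y)
          + ∫ x in Ioi X, (2/x) * ∫ y in Ioi (max (x-1) 1), gg lam y := by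
      rw [← Ioc_union_Ioi_eq_Ioi hX1.le]
      exact setIntegral_union ((Set.Iic_disjoint_Ioi le_rfl).mono_left Ioc_subset_Iic_self)
        measurableSet_Ioi ((F_int hlam).mono_set Ioc_subset_Ioi_self)
        ((F_int hlam).mono_set (Ioi_subset_Ioi hX1.le))
    have part1 : ∫ x in Ioc (1:ℝ) X, (2/x) * ∫ y in Ioi (max (x-1) 1), gg lam y
        ≤ C^2 := by
      have h1 : ∫ x in Ioc (1:ℝ) X, (2/x) * ∫ y in Ioi (max (x-1) 1), gg lam y
          ≤ ∫ x in Ioc (1:ℝ) X, (2/x) * (C - Real.log x) := by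
        apply setIntegral_mono_on ((F_int hlam).mono_set Ioc_subset_Ioi_self)
          (comp_int C X hX1.le) measurableSet_Ioc
        intro x hx
        have hx1 : (1:ℝ) < x := hx.1
        have hm1 : (1:ℝ) ≤ max (x-1) 1 := le_max_right _ _
        have hmS : max (x-1) 1 ≤ S := max_le (by linarith [hx.2]) hS1
        have hI := inner_split_le hlam hm1 hmS
        have hlogm : Real.log x - Real.log 2 ≤ Real.log (max (x-1) 1) := by
          have h2m : x ≤ 2 * max (x-1) 1 := by
            have := le_max_left (x-1) 1
            have := le_max_right (x-1) 1
            linarith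
          have := Real.log_le_log (by linarith) h2m
          rw [Real.log_mul (by norm_num) (by positivity)] at this
          linarith
        have htail : 1/(lam*S) ≤ 1 := by
          rw [div_le_one (by positivity)]
          nlinarith
        have hIx : ∫ y in Ioi (max (x-1) 1), gg lam y ≤ C - Real.log x := by
          rw [hCdef]; linarith
        exact mul_le_mul_of_nonneg_left hIx (by positivity)
      rw [outer_eval C X hX1.le] at h1
      have hq : 2*C*Real.log X - (Real.log X)^2 ≤ C^2 := by
        nlinarith [sq_nonneg (C - Real.log X)]
      exact le_trans h1 hq
    have part2 : ∫ x in Ioi X, (2/x) * ∫ y in Ioi (max (x-1) 1), gg lam y ≤ 2 := by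
      have h1 : ∫ x in Ioi X, (2/x) * ∫ y in Ioi (max (x-1) 1), gg lam y
          ≤ ∫ x in Ioi X, Real.exp lam * Real.exp (-lam * x) := by
        apply setIntegral_mono_on ((F_int hlam).mono_set (Ioi_subset_Ioi hX1.le))
          ((exp_neg_integrableOn_Ioi X hlam).const_mul _) measurableSet_Ioi
        intro x hx
        have hxX : X < x := hx
        have hx2 : (2:ℝ) ≤ x := by linarith
        have hmax : max (x-1) 1 = x - 1 := max_eq_left (by linarith)
        have hI := inner_le_tail hlam (m := x - 1) (by linarith)
        rw [hmax]
        have hlamx : (1:ℝ) ≤ lam * (x-1) := by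
          have : S * lam ≤ (x-1) * lam := mul_le_mul_of_nonneg_right (by linarith) hlam.le
          nlinarith
        calc (2/x) * ∫ y in Ioi (x-1), gg lam y
            ≤ (2/x) * (Real.exp (-lam * (x-1)) / (lam * (x-1))) :=
              mul_le_mul_of_nonneg_left hI (by positivity)
          _ ≤ Real.exp (-lam * (x-1)) := by
              have hx0 : (0:ℝ) < x := by linarith
              have hE := Real.exp_pos (-lam * (x-1))
              have key : Real.exp (-lam * (x-1)) / (lam * (x-1)) ≤ Real.exp (-lam * (x-1)) :=
                div_le_self hE.le hlamx
              have h5 : (2/x) * (Real.exp (-lam * (x-1)) / (lam * (x-1)))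
                  ≤ (2/x) * Real.exp (-lam * (x-1)) :=
                mul_le_mul_of_nonneg_left key (by positivity)
              have h6 : (2/x) * Real.exp (-lam * (x-1)) ≤ Real.exp (-lam * (x-1)) := by
                rw [div_mul_eq_mul_div, div_le_iff₀ hx0]
                nlinarith
              linarith
          _ = Real.exp lam * Real.exp (-lam * x) := by
              rw [← Real.exp_add]; ring_nf
      have h2 : ∫ x in Ioi X, Real.exp lam * Real.exp (-lam * x)
          = Real.exp (-lam * S) / lam := by
        rw [MeasureTheory.integral_const_mul, my_integral_exp_neg_mul_Ioi hlam,
          ← mul_div_assoc, ← Real.exp_add]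
        congr 2
        rw [hXdef]; ring
      have h3 : Real.exp (-lam * S) / lam ≤ 2 := by
        rw [div_le_iff₀ hlam]
        have : (1:ℝ)/(2*D) * 2 ≤ lam * 2 := by linarith
        calc Real.exp (-lam * S) ≤ 1/D := hexpS
          _ = (1/(2*D)) * 2 := by field_simp
          _ ≤ 2 * lam := by linarith
      linarith
    have hlogS : Real.log S = Real.log 2 + Real.log D + Real.log (Real.log D) := by
      rw [hSdef, Real.log_mul (by positivity) (ne_of_gt hl0),
        Real.log_mul (by norm_num) (ne_of_gt hD0)]
    have hCval : C = Real.log D + Real.log (Real.log D) + (2*Real.log 2 + 1) := by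
      rw [hCdef, hlogS]; ring
    rw [hsplit, ← hCval]
    linarith

lemma tendsto_loglog_div_log :
    Tendsto (fun d : ℕ => Real.log (Real.log d) / Real.log d) atTop (nhds 0) := by
  have h0 : Tendsto (fun t : ℝ => Real.log t / t) atTop (nhds 0) := by
    simpa using Real.isLittleO_log_id_atTop.tendsto_div_nhds_zero
  have h1 : Tendsto (fun d : ℕ => Real.log (d:ℝ)) atTop atTop :=
    Real.tendsto_log_atTop.comp tendsto_natCast_atTop_atTop
  exact h0.comp h1

lemma tendsto_one_div_log :
    Tendsto (fun d : ℕ => 1 / Real.log d) atTop (nhds 0) := by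
  have h1 : Tendsto (fun d : ℕ => Real.log (d:ℝ)) atTop atTop :=
    Real.tendsto_log_atTop.comp tendsto_natCast_atTop_atTop
  simpa [one_div, Pi.inv_def] using h1.inv_tendsto_atTop

theorem stmt4 :
    Tendsto (fun d : ℕ =>
        (∫ x in Set.Ioi (1 : ℝ),
          (2 / x) *
            ∫ y in Set.Ioi (max (x - 1) 1),
              ((1 - 1 / (2 * (d : ℝ))) ^ y) / y) /
          (Real.log d) ^ 2)
      atTop (nhds 1) := by
  have hlog : Tendsto (fun d : ℕ => Real.log (d:ℝ)) atTop atTop :=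
    Real.tendsto_log_atTop.comp tendsto_natCast_atTop_atTop
  have hlgt : ∀ᶠ d : ℕ in atTop, 1 < Real.log (d:ℝ) := hlog.eventually (eventually_gt_atTop 1)
  have h2 := tendsto_one_div_log
  have h3 := tendsto_loglog_div_log
  -- lower and upper comparison sequences
  set Lb : ℕ → ℝ := fun d =>
    (1 - 1/Real.log d) * (Real.log d - Real.log (Real.log d))^2 / (Real.log d)^2 with hLb
  set Ub : ℕ → ℝ := fun d =>
    ((Real.log d + Real.log (Real.log d) + (2*Real.log 2 + 1))^2 + 2) / (Real.log d)^2 with hUb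
  have hLbT : Tendsto Lb atTop (nhds 1) := by
    have heq : ∀ᶠ d : ℕ in atTop,
        (1 - 1/Real.log d) * (1 - Real.log (Real.log d)/Real.log d)^2 = Lb d := by
      filter_upwards [hlgt] with d hd
      have h0 : Real.log (d:ℝ) ≠ 0 := by linarith
      rw [hLb]
      field_simp
      try ring
    have hT : Tendsto (fun d : ℕ =>
        (1 - 1/Real.log d) * (1 - Real.log (Real.log d)/Real.log d)^2) atTop (nhds 1) := by
      have hA := (h2.const_sub 1).mul ((h3.const_sub 1).pow 2)
      norm_num at hA
      exact hA.congr (fun d => by rw [one_div])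
    exact Tendsto.congr' heq hT
  have hUbT : Tendsto Ub atTop (nhds 1) := by
    have heq : ∀ᶠ d : ℕ in atTop,
        (1 + (Real.log (Real.log d)/Real.log d + (2*Real.log 2 + 1)*(1/Real.log d)))^2
          + 2*(1/Real.log d)^2 = Ub d := by
      filter_upwards [hlgt] with d hd
      have h0 : Real.log (d:ℝ) ≠ 0 := by linarith
      rw [hUb]
      field_simp
      ring
    have hT : Tendsto (fun d : ℕ =>
        (1 + (Real.log (Real.log d)/Real.log d + (2*Real.log 2 + 1)*(1/Real.log d)))^2
          + 2*(1/Real.log d)^2) atTop (nhds 1) := by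
      have hA := (((h3.add (h2.const_mul (2*Real.log 2 + 1))).const_add 1).pow 2).add
        ((h2.pow 2).const_mul 2)
      norm_num at hA
      exact hA.congr (fun d => by rw [one_div, inv_pow])
    exact Tendsto.congr' heq hT
  apply tendsto_of_tendsto_of_tendsto_of_le_of_le' hLbT hUbT
  · -- lower bound eventually
    filter_upwards [eventually_ge_atTop 100, hlgt] with d hd hld
    have hD : (100:ℝ) ≤ (d:ℝ) := by exact_mod_cast hd
    set lam : ℝ := -Real.log (1 - 1/(2*(d:ℝ))) with hlamdef
    have hmb := main_bounds hD hlamdef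
    have hA0 : (0:ℝ) < 1 - 1/(2*(d:ℝ)) := by
      have : (1:ℝ)/(2*(d:ℝ)) ≤ 1/200 := by
        apply one_div_le_one_div_of_le <;> linarith
      linarith
    have hfg : ∀ y : ℝ, ((1 - 1/(2*(d:ℝ))) ^ y) / y = gg lam y := by
      intro y
      rw [gg, Real.rpow_def_of_pos hA0, hlamdef]
      ring_nf
    simp only [hfg]
    have hpos : (0:ℝ) < (Real.log (d:ℝ))^2 := by positivity
    rw [hLb]
    exact div_le_div_of_nonneg_right hmb.1 hpos.le |>.trans_eq rfl
  · -- upper bound eventually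
    filter_upwards [eventually_ge_atTop 100, hlgt] with d hd hld
    have hD : (100:ℝ) ≤ (d:ℝ) := by exact_mod_cast hd
    set lam : ℝ := -Real.log (1 - 1/(2*(d:ℝ))) with hlamdef
    have hmb := main_bounds hD hlamdef
    have hA0 : (0:ℝ) < 1 - 1/(2*(d:ℝ)) := by
      have : (1:ℝ)/(2*(d:ℝ)) ≤ 1/200 := by
        apply one_div_le_one_div_of_le <;> linarith
      linarith
    have hfg : ∀ y : ℝ, ((1 - 1/(2*(d:ℝ))) ^ y) / y = gg lam y := by
      intro y
      rw [gg, Real.rpow_def_of_pos hA0, hlamdef]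
      ring_nf
    simp only [hfg]
    have hpos : (0:ℝ) < (Real.log (d:ℝ))^2 := by positivity
    rw [hUb]
    exact div_le_div_of_nonneg_right hmb.2 hpos.le |>.trans_eq rfl
end

section
/- Fix an integer $d \geq 2$, set $A = 1 - \frac{1}{2d}$ and $s_n = 2(d-1) n^{\frac{d-2}{d-1}}$. Suppose $(x_n)_{n\geq 1}$ and $(y_n)_{n\geq 1}$ are bounded sequences of nonnegative reals with $x_n \leq \frac{1}{n+s_n} + A x_{n+1}$ and $y_n \leq \frac{2}{(n+s_n)^2} + \frac{2A}{n+s_n} x_{n+1} + A y_{n+1}$ for all $n \geq 1$. Then $y_1 \leq 2 \sum_{n=1}^{\infty} \frac{A^{n-1}}{n+s_n} \sum_{k=1}^{n} \frac{1}{k+s_k}$. -/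
/-!
Put `f n = 1 / (n + 1 + s (n + 1))`, so that `0 ≤ f ≤ 1`. Unrolling the first recursion
and using boundedness (`Aᴺ x → 0`) gives `x (n + 1) ≤ g n := ∑ⱼ Aʲ f (n + j)`, the bounded
solution of `g n = f n + A g (n + 1)`. Then
`2 f n² + 2 A f n x (n + 2) ≤ 2 f n (f n + A g (n + 1)) = 2 f n g n`,
so the second recursion unrolls to `y 1 ≤ 2 ∑ₙ Aⁿ f n g n`. Regrouping the double series
`∑ₙ ∑ⱼ Aⁿ⁺ʲ f n f (n + j)` by `m = n + j` turns this into `2 ∑ₘ Aᵐ f m ∑_{k ≤ m} f k`.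
-/

open Finset

theorem tsum_tsum_shift_eq_tsum_sum_range {α : Type*} [AddCommGroup α] [UniformSpace α]
    [IsUniformAddGroup α] [CompleteSpace α] [T0Space α] {F : ℕ → ℕ → α}
    (hF : Summable fun p : ℕ × ℕ => F p.1 (p.1 + p.2)) :
    ∑' n, ∑' j, F n (n + j) = ∑' m, ∑ k ∈ range (m + 1), F k m := by
  let e := HasAntidiagonal.sigmaAntidiagonalEquivProd (A := ℕ)
  rw [← hF.tsum_prod' hF.prod_factor, ← e.tsum_eq]
  refine ((e.summable_iff.mpr hF).tsum_sigma' fun _ => (hasSum_fintype _).summable).trans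
    (tsum_congr fun m => ?_)
  rw [tsum_fintype]
  show ∑ p : antidiagonal m, F p.1.1 (p.1.1 + p.1.2) = _
  rw [sum_coe_sort (antidiagonal m) fun p => F p.1 (p.1 + p.2),
    ← Nat.sum_antidiagonal_subst, Nat.sum_antidiagonal_eq_sum_range_succ_mk]

theorem le_tsum_pow_mul_of_le_add_mul {A : ℝ} (hA0 : 0 ≤ A) (hA1 : A < 1) {u c : ℕ → ℝ}
    (hu : ∃ B, ∀ n, u n ≤ B) (hc : Summable fun n => A ^ n * c n)
    (h : ∀ n, u n ≤ c n + A * u (n + 1)) : u 0 ≤ ∑' n, A ^ n * c n := by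
  obtain ⟨B, hB⟩ := hu
  have unrolled : ∀ N, u 0 ≤ ∑ n ∈ range N, A ^ n * c n + A ^ N * u N := by
    intro N
    induction N with
    | zero => simp
    | succ N ih =>
      rw [sum_range_succ, pow_succ]
      nlinarith [mul_le_mul_of_nonneg_left (h N) (pow_nonneg hA0 N)]
  have bounded : ∀ N, u 0 ≤ ∑ n ∈ range N, A ^ n * c n + A ^ N * max B 0 := fun N =>
    (unrolled N).trans (by gcongr; exact (hB N).trans (le_max_left _ _))
  have hlim := hc.hasSum.tendsto_sum_nat.add
    ((tendsto_pow_atTop_nhds_zero_of_lt_one hA0 hA1).mul_const (max B 0))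
  rw [zero_mul, add_zero] at hlim
  exact ge_of_tendsto' hlim bounded

noncomputable def discountedTail (A : ℝ) (f : ℕ → ℝ) (n : ℕ) : ℝ := ∑' j, A ^ j * f (n + j)

section DiscountedTail

variable {A : ℝ} {f : ℕ → ℝ}

theorem summable_pow_mul_of_nonneg_of_le_one (hA0 : 0 ≤ A) (hA1 : A < 1)
    (hf0 : ∀ n, 0 ≤ f n) (hf1 : ∀ n, f n ≤ 1) : Summable fun n => A ^ n * f n :=
  (summable_geometric_of_lt_one hA0 hA1).of_nonneg_of_le
    (fun n => mul_nonneg (pow_nonneg hA0 n) (hf0 n))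
    (fun n => mul_le_of_le_one_right (pow_nonneg hA0 n) (hf1 n))

theorem discountedTail_nonneg (hA0 : 0 ≤ A) (hf0 : ∀ n, 0 ≤ f n) (n : ℕ) :
    0 ≤ discountedTail A f n :=
  tsum_nonneg fun j => mul_nonneg (pow_nonneg hA0 j) (hf0 _)

theorem summable_discountedTail_terms
    (hA0 : 0 ≤ A) (hA1 : A < 1) (hf0 : ∀ n, 0 ≤ f n) (hf1 : ∀ n, f n ≤ 1) (n : ℕ) :
    Summable fun j => A ^ j * f (n + j) :=
  summable_pow_mul_of_nonneg_of_le_one hA0 hA1 (fun _ => hf0 _) (fun _ => hf1 _)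

theorem discountedTail_le
    (hA0 : 0 ≤ A) (hA1 : A < 1) (hf0 : ∀ n, 0 ≤ f n) (hf1 : ∀ n, f n ≤ 1) (n : ℕ) :
    discountedTail A f n ≤ (1 - A)⁻¹ := by
  rw [← tsum_geometric_of_lt_one hA0 hA1]
  exact (summable_discountedTail_terms hA0 hA1 hf0 hf1 n).tsum_le_tsum
    (fun j => mul_le_of_le_one_right (pow_nonneg hA0 j) (hf1 _))
    (summable_geometric_of_lt_one hA0 hA1)

theorem discountedTail_eq_add
    (hA0 : 0 ≤ A) (hA1 : A < 1) (hf0 : ∀ n, 0 ≤ f n) (hf1 : ∀ n, f n ≤ 1) (n : ℕ) :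
    discountedTail A f n = f n + A * discountedTail A f (n + 1) := by
  rw [discountedTail, (summable_discountedTail_terms hA0 hA1 hf0 hf1 n).tsum_eq_zero_add,
    discountedTail, ← tsum_mul_left]
  simp only [pow_zero, one_mul, add_zero, pow_succ]
  congr 1
  exact tsum_congr fun j => by rw [add_right_comm, add_assoc n]; ring

theorem le_discountedTail_of_le_add_mul
    (hA0 : 0 ≤ A) (hA1 : A < 1) (hf0 : ∀ n, 0 ≤ f n) (hf1 : ∀ n, f n ≤ 1)
    {x : ℕ → ℝ} (hx : ∃ B, ∀ n, x n ≤ B)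
    (hrec : ∀ n, x n ≤ f n + A * x (n + 1)) (n : ℕ) : x n ≤ discountedTail A f n := by
  obtain ⟨B, hB⟩ := hx
  exact le_tsum_pow_mul_of_le_add_mul hA0 hA1 (u := fun m => x (n + m)) ⟨B, fun m => hB _⟩
    (summable_discountedTail_terms hA0 hA1 hf0 hf1 n) fun m => hrec (n + m)

theorem tsum_pow_mul_mul_discountedTail
    (hA0 : 0 ≤ A) (hA1 : A < 1) (hf0 : ∀ n, 0 ≤ f n) (hf1 : ∀ n, f n ≤ 1) :
    ∑' n, A ^ n * (f n * discountedTail A f n) =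
      ∑' m, A ^ m * (f m * ∑ k ∈ range (m + 1), f k) := by
  have hgeo := summable_geometric_of_lt_one hA0 hA1
  have hpairs : Summable fun p : ℕ × ℕ => A ^ (p.1 + p.2) * (f p.1 * f (p.1 + p.2)) := by
    refine (hgeo.mul_of_nonneg hgeo (fun n => pow_nonneg hA0 n) fun n => pow_nonneg hA0 n)
      |>.of_nonneg_of_le (fun p => mul_nonneg (pow_nonneg hA0 _) (mul_nonneg (hf0 _) (hf0 _)))
      fun p => ?_
    rw [pow_add]
    exact mul_le_of_le_one_right (by positivity) (mul_le_one₀ (hf1 _) (hf0 _) (hf1 _))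
  calc ∑' n, A ^ n * (f n * discountedTail A f n)
      = ∑' n, ∑' j, A ^ (n + j) * (f n * f (n + j)) := tsum_congr fun n => by
        rw [discountedTail, ← tsum_mul_left, ← tsum_mul_left]
        exact tsum_congr fun j => by ring
    _ = ∑' m, ∑ k ∈ range (m + 1), A ^ m * (f k * f m) :=
        tsum_tsum_shift_eq_tsum_sum_range (F := fun n m => A ^ m * (f n * f m)) hpairs
    _ = _ := tsum_congr fun m => by
        rw [mul_sum, mul_sum]
        exact sum_congr rfl fun k _ => by ring

theorem le_two_mul_tsum_of_le_recursions
    (hA0 : 0 ≤ A) (hA1 : A < 1) (hf0 : ∀ n, 0 ≤ f n) (hf1 : ∀ n, f n ≤ 1)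
    {x y : ℕ → ℝ} (hx : ∃ B, ∀ n, x n ≤ B) (hy : ∃ B, ∀ n, y n ≤ B)
    (hxrec : ∀ n, x n ≤ f n + A * x (n + 1))
    (hyrec : ∀ n, y n ≤ 2 * f n ^ 2 + 2 * A * f n * x (n + 1) + A * y (n + 1)) :
    y 0 ≤ 2 * ∑' m, A ^ m * (f m * ∑ k ∈ range (m + 1), f k) := by
  have hyg (n : ℕ) : y n ≤ 2 * (f n * discountedTail A f n) + A * y (n + 1) := by
    have hxg := le_discountedTail_of_le_add_mul hA0 hA1 hf0 hf1 hx hxrec (n + 1)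
    rw [discountedTail_eq_add hA0 hA1 hf0 hf1 n]
    nlinarith [hyrec n, mul_le_mul_of_nonneg_left hxg (mul_nonneg hA0 (hf0 n))]
  have hsum : Summable fun n => A ^ n * (2 * (f n * discountedTail A f n)) := by
    refine ((summable_geometric_of_lt_one hA0 hA1).mul_right (2 * (1 - A)⁻¹)).of_nonneg_of_le
      (fun n => ?_) fun n => ?_
    · exact mul_nonneg (pow_nonneg hA0 n)
        (mul_nonneg two_pos.le (mul_nonneg (hf0 n) (discountedTail_nonneg hA0 hf0 n)))
    · gcongr
      exact (mul_le_of_le_one_left (discountedTail_nonneg hA0 hf0 n) (hf1 n)).trans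
        (discountedTail_le hA0 hA1 hf0 hf1 n)
  calc y 0 ≤ ∑' n, A ^ n * (2 * (f n * discountedTail A f n)) :=
        le_tsum_pow_mul_of_le_add_mul hA0 hA1 hy hsum hyg
    _ = 2 * ∑' n, A ^ n * (f n * discountedTail A f n) := by
      rw [← tsum_mul_left]; exact tsum_congr fun n => by ring
    _ = _ := by rw [tsum_pow_mul_mul_discountedTail hA0 hA1 hf0 hf1]

end DiscountedTail

open Real Filter

theorem stmt6_general (d : ℕ) (hd : 2 ≤ d)
    (A : ℝ) (hA : A = 1 - 1 / (2 * (d : ℝ)))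
    (s : ℕ → ℝ) (hs : ∀ n : ℕ, s n = 2 * ((d : ℝ) - 1) * (n : ℝ) ^ (((d : ℝ) - 2) / ((d : ℝ) - 1)))
    (x y : ℕ → ℝ)
    (hxbdd : ∃ B : ℝ, ∀ n, x n ≤ B) (hybdd : ∃ B : ℝ, ∀ n, y n ≤ B)
    (hxrec : ∀ n : ℕ, 1 ≤ n → x n ≤ 1 / ((n : ℝ) + s n) + A * x (n + 1))
    (hyrec : ∀ n : ℕ, 1 ≤ n →
      y n ≤ 2 / ((n : ℝ) + s n) ^ 2 + (2 * A) / ((n : ℝ) + s n) * x (n + 1) + A * y (n + 1)) :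
    y 1 ≤ 2 * ∑' n : ℕ,
        (A ^ n / (((n : ℝ) + 1) + s (n + 1))) *
          ∑ k ∈ Finset.range (n + 1), 1 / (((k : ℝ) + 1) + s (k + 1)) := by
  have hd' : (2 : ℝ) ≤ d := by exact_mod_cast hd
  have hA0 : 0 ≤ A := by
    rw [hA, sub_nonneg, div_le_one (by positivity)]
    linarith
  have hA1 : A < 1 := by
    rw [hA]
    linarith [show 0 < 1 / (2 * (d : ℝ)) by positivity]
  have hs0 (n : ℕ) : 0 ≤ s n := by
    rw [hs]
    exact mul_nonneg (by linarith) (rpow_nonneg n.cast_nonneg _)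
  set f : ℕ → ℝ := fun n => 1 / ((n : ℝ) + 1 + s (n + 1)) with hf
  have hden (n : ℕ) : 1 ≤ (n : ℝ) + 1 + s (n + 1) := by
    linarith [hs0 (n + 1), n.cast_nonneg (α := ℝ)]
  have hf0 (n : ℕ) : 0 ≤ f n := by have := hden n; positivity
  have hf1 (n : ℕ) : f n ≤ 1 := div_le_one_of_le₀ (hden n) (by linarith [hden n])
  have key := le_two_mul_tsum_of_le_recursions hA0 hA1 hf0 hf1
    (x := fun n => x (n + 1)) (y := fun n => y (n + 1))
    (hxbdd.imp fun B hB n => hB _) (hybdd.imp fun B hB n => hB _)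
    (fun n => by simpa [hf] using hxrec (n + 1) (by omega))
    (fun n => by
      convert hyrec (n + 1) (by omega) using 2
      simp only [hf]
      push_cast
      field_simp)
  refine key.trans_eq (congrArg (2 * ·) (tsum_congr fun n => ?_))
  simp only [hf]
  ring

theorem stmt6 (d : ℕ) (hd : 2 ≤ d)
    (A : ℝ) (hA : A = 1 - 1 / (2 * (d : ℝ)))
    (s : ℕ → ℝ) (hs : ∀ n : ℕ, s n = 2 * ((d : ℝ) - 1) * (n : ℝ) ^ (((d : ℝ) - 2) / ((d : ℝ) - 1)))
    (x y : ℕ → ℝ) (hxnn : ∀ n, 0 ≤ x n) (hynn : ∀ n, 0 ≤ y n)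
    (hxbdd : ∃ B : ℝ, ∀ n, x n ≤ B) (hybdd : ∃ B : ℝ, ∀ n, y n ≤ B)
    (hxrec : ∀ n : ℕ, 1 ≤ n → x n ≤ 1 / ((n : ℝ) + s n) + A * x (n + 1))
    (hyrec : ∀ n : ℕ, 1 ≤ n →
      y n ≤ 2 / ((n : ℝ) + s n) ^ 2 + (2 * A) / ((n : ℝ) + s n) * x (n + 1) + A * y (n + 1)) :
    y 1 ≤ 2 * ∑' n : ℕ,
        (A ^ n / (((n : ℝ) + 1) + s (n + 1))) *
          ∑ k ∈ Finset.range (n + 1), 1 / (((k : ℝ) + 1) + s (k + 1)) :=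
  stmt6_general d hd A hA s hs x y hxbdd hybdd hxrec hyrec
end

section
/- Let $A_d = 1 - \frac{1}{2d}$ and $s^{(d)}_n = 2(d-1) n^{\frac{d-2}{d-1}}$. There exists a constant $C > 0$ such that for all sufficiently large $d$, $\sum_{n=2}^{\infty} \frac{A_d^{n-1}}{s^{(d)}_n} \leq C \frac{\log d}{d}$. -/
open Real Filter

/-!
Write `(n+2)^((d-2)/(d-1)) = (n+2) / (n+2)^(1/(d-1))`. Since `log x ≤ x / e`, the correction
factor `(n+2)^(1/(d-1))` is at most `exp ((n+2) / (e (d-1)))`; as `1/e < 1/2`, this only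
enlarges the ratio `1 - 1/(2d)` of the geometric decay to some `y ≤ exp (-1/(12d))`. The series
is then dominated by a multiple of `(d-1)⁻¹ ∑ yⁿ⁺¹/(n+1) = -log (1-y) / (d-1)`, and
`-log (1-y) ≤ log (24d)`.
-/

theorem Real.log_le_div_exp_one {x : ℝ} (hx : 0 < x) : log x ≤ x / exp 1 := by
  have h := log_le_sub_one_of_pos (div_pos hx (exp_pos 1))
  rw [log_div hx.ne' (exp_ne_zero 1), log_exp] at h
  linarith

theorem Real.rpow_le_exp_mul_div_exp_one {x p : ℝ} (hx : 0 < x) (hp : 0 ≤ p) :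
    x ^ p ≤ exp (p / exp 1 * x) := by
  rw [rpow_def_of_pos hx, mul_comm, exp_le_exp, div_mul_eq_mul_div, mul_div_assoc]
  exact mul_le_mul_of_nonneg_left (log_le_div_exp_one hx) hp

theorem pow_succ_div_rpow_one_sub_le {a p : ℝ} (ha : 0 ≤ a) (hp : 0 ≤ p) (n : ℕ) :
    a ^ (n + 1) / ((n : ℝ) + 2) ^ (1 - p) ≤
      exp (p / exp 1) * ((a * exp (p / exp 1)) ^ (n + 1) / ((n : ℝ) + 1)) := by
  set c := p / exp 1
  have hN : (0 : ℝ) < (n : ℝ) + 2 := by positivity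
  have hexp : exp (c * ((n : ℝ) + 2)) = exp c * exp c ^ (n + 1) := by
    rw [← exp_nat_mul, ← exp_add]; push_cast; ring_nf
  calc a ^ (n + 1) / ((n : ℝ) + 2) ^ (1 - p)
      = a ^ (n + 1) * ((n : ℝ) + 2) ^ p / ((n : ℝ) + 2) := by
        rw [rpow_sub hN, rpow_one]; field_simp
    _ ≤ a ^ (n + 1) * (exp c * exp c ^ (n + 1)) / ((n : ℝ) + 2) := by
        rw [← hexp]; gcongr; exact rpow_le_exp_mul_div_exp_one hN hp
    _ ≤ a ^ (n + 1) * (exp c * exp c ^ (n + 1)) / ((n : ℝ) + 1) := by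
        gcongr; linarith
    _ = exp c * ((a * exp c) ^ (n + 1) / ((n : ℝ) + 1)) := by ring

theorem tsum_pow_succ_div_rpow_one_sub_le {a p : ℝ} (ha : 0 ≤ a) (hp : 0 ≤ p)
    (hy : a * exp (p / exp 1) < 1) :
    ∑' n : ℕ, a ^ (n + 1) / ((n : ℝ) + 2) ^ (1 - p) ≤
      exp (p / exp 1) * -log (1 - a * exp (p / exp 1)) := by
  have hlog : HasSum (fun n : ℕ ↦ exp (p / exp 1) *
      ((a * exp (p / exp 1)) ^ (n + 1) / ((n : ℝ) + 1)))
      (exp (p / exp 1) * -log (1 - a * exp (p / exp 1))) := by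
    refine (hasSum_pow_div_log_of_abs_lt_one ?_).mul_left _
    rwa [abs_of_nonneg (by positivity)]
  refine hlog.tsum_eq ▸ Summable.tsum_le_tsum (pow_succ_div_rpow_one_sub_le ha hp) ?_
    hlog.summable
  exact hlog.summable.of_nonneg_of_le (fun n ↦ by positivity) (pow_succ_div_rpow_one_sub_le ha hp)

theorem neg_log_one_sub_le_log_two_div {y δ : ℝ} (hδ : 0 < δ) (hδ1 : δ ≤ 1)
    (hy : y ≤ exp (-δ)) : -log (1 - y) ≤ log (2 / δ) := by
  have hexp : exp (-δ) ≤ 1 - δ / 2 := by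
    rw [exp_neg, inv_le_iff_one_le_mul₀ (exp_pos δ)]
    nlinarith [add_one_le_exp δ]
  have h := log_le_log (by positivity) (show δ / 2 ≤ 1 - y by linarith)
  rw [← inv_div, log_inv]
  linarith

theorem one_sub_inv_two_mul_mul_exp_le {D : ℝ} (hD : 9 ≤ D) :
    (1 - 1 / (2 * D)) * exp (1 / (D - 1) / exp 1) ≤ exp (-(1 / (12 * D))) := by
  have he : 2.7 < exp 1 := lt_trans (by norm_num) exp_one_gt_d9
  have hA : 1 - 1 / (2 * D) ≤ exp (-(1 / (2 * D))) := by
    linarith [add_one_le_exp (-(1 / (2 * D)))]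
  calc (1 - 1 / (2 * D)) * exp (1 / (D - 1) / exp 1)
      ≤ exp (-(1 / (2 * D))) * exp (1 / (D - 1) / exp 1) := by
        gcongr
    _ ≤ exp (-(1 / (12 * D))) := by
        rw [← exp_add]
        gcongr
        have hc : 1 / ((D - 1) * exp 1) ≤ 5 / (12 * D) := by
          rw [div_le_div_iff₀ (mul_pos (by linarith) (exp_pos 1)) (by positivity)]; nlinarith
        have h6 : 1 / (2 * D) = 6 / (12 * D) := by field_simp; norm_num
        rw [div_div, h6]
        linarith [show 6 / (12 * D) = 5 / (12 * D) + 1 / (12 * D) by ring]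

theorem neg_log_one_sub_le_two_mul_log {D : ℝ} (hD : 24 ≤ D) :
    -log (1 - (1 - 1 / (2 * D)) * exp (1 / (D - 1) / exp 1)) ≤ 2 * log D := by
  have h := neg_log_one_sub_le_log_two_div (by positivity)
    (by rw [div_le_one (by positivity)]; linarith) (one_sub_inv_two_mul_mul_exp_le (by linarith))
  rw [show 2 / (1 / (12 * D)) = 24 * D by field_simp; norm_num,
    log_mul (by norm_num) (by positivity)] at h
  linarith [log_le_log (by norm_num) hD]

theorem tsum_le_six_mul_log_div {D : ℝ} (hD : 24 ≤ D) :
    ∑' n : ℕ, (1 - 1 / (2 * D)) ^ (n + 1) /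
        (2 * (D - 1) * ((n : ℝ) + 2) ^ ((D - 2) / (D - 1))) ≤ 6 * log D / D := by
  set a := 1 - 1 / (2 * D) with ha
  set p := 1 / (D - 1) with hp
  set y := a * exp (p / exp 1)
  have ha0 : 0 ≤ a := by rw [ha, sub_nonneg, div_le_one (by linarith)]; linarith
  have hp0 : 0 ≤ p := one_div_nonneg.mpr (by linarith)
  have hy0 : 0 ≤ y := by positivity
  have hy1 : y < 1 := (one_sub_inv_two_mul_mul_exp_le (by linarith)).trans_lt
    (exp_lt_one_iff.mpr (by simp; positivity))
  have hlog : 0 ≤ -log (1 - y) := neg_nonneg.mpr (log_nonpos (by linarith) (by linarith))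
  have hc : exp (p / exp 1) ≤ 3 := by
    refine (exp_le_exp.mpr ?_).trans (exp_one_lt_d9.trans (by norm_num)).le
    refine (div_le_self hp0 (one_le_exp zero_le_one)).trans ?_
    rw [hp, div_le_one (by linarith)]; linarith
  have hα : (D - 2) / (D - 1) = 1 - p := by rw [hp, one_sub_div (by linarith)]; ring_nf
  have hk : 0 ≤ (2 * (D - 1))⁻¹ := inv_nonneg.mpr (by linarith)
  simp only [hα, div_mul_eq_div_div_swap, div_eq_inv_mul (_ / _), tsum_mul_left]
  calc (2 * (D - 1))⁻¹ * ∑' n : ℕ, a ^ (n + 1) / ((n : ℝ) + 2) ^ (1 - p)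
      ≤ (2 * (D - 1))⁻¹ * (exp (p / exp 1) * -log (1 - y)) :=
        mul_le_mul_of_nonneg_left (tsum_pow_succ_div_rpow_one_sub_le ha0 hp0 hy1) hk
    _ ≤ (2 * (D - 1))⁻¹ * (3 * (2 * log D)) :=
        mul_le_mul_of_nonneg_left
          (mul_le_mul hc (neg_log_one_sub_le_two_mul_log hD) hlog (by norm_num)) hk
    _ ≤ 6 * log D / D := by
        rw [inv_mul_eq_div, div_le_div_iff₀ (by linarith) (by linarith)]
        nlinarith [log_nonneg (by linarith : (1 : ℝ) ≤ D)]

theorem stmt7 :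
    ∃ C : ℝ, 0 < C ∧ ∀ᶠ d : ℕ in atTop,
      (∑' n : ℕ, (1 - 1 / (2 * (d : ℝ))) ^ (n + 1) /
          (2 * ((d : ℝ) - 1) * ((n : ℝ) + 2) ^ (((d : ℝ) - 2) / ((d : ℝ) - 1)))) ≤
        C * Real.log d / d := by
  refine ⟨6, by norm_num, ?_⟩
  filter_upwards [eventually_ge_atTop 24] with d hd
  exact tsum_le_six_mul_log_div (by exact_mod_cast hd)
end

section
/- Let $A_d = 1 - \frac{1}{2d}$ and $s^{(d)}_n = 2(d-1) n^{\frac{d-2}{d-1}}$. Then $\limsup_{d\to\infty} \frac{2d}{\log d} \left( \frac{1}{1 + s^{(d)}_1} + \sum_{n=2}^{\infty} \frac{A_d^{n-1}}{s^{(d)}_n} \right) \leq 1$. -/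
open Real Filter
open Real Filter Topology

lemma sum_bound {x : ℝ} (hx : 3 ≤ x) :
    (∑' n : ℕ, (1 - 1 / (2 * x)) ^ (n + 1) /
        (2 * (x - 1) * ((n : ℝ) + 2) ^ ((x - 2) / (x - 1))))
      ≤ (x ^ 2) ^ ((1:ℝ) / (x - 1)) * Real.exp (1 / ((x - 1) * x ^ 2)) * Real.log (4 * x) /
          (2 * (x - 1)) := by
  have hx0 : (0:ℝ) < x := by linarith
  have hx1 : (0:ℝ) < x - 1 := by linarith
  set A : ℝ := 1 - 1 / (2 * x) with hA
  set δ : ℝ := 1 / ((x - 1) * x ^ 2) with hδ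
  set K : ℝ := (x ^ 2) ^ ((1:ℝ) / (x - 1)) * Real.exp δ with hK
  set r : ℝ := A * Real.exp δ with hr
  have hA0 : 0 < A := by
    have : 1 / (2 * x) < 1 := by rw [div_lt_one (by linarith)]; linarith
    simp only [hA]; linarith
  have hδ0 : 0 < δ := by positivity
  have hδle : δ ≤ 1 / (4 * x) := by
    rw [hδ, div_le_div_iff₀ (by positivity) (by positivity)]
    nlinarith
  have hkey : (1 - δ) * Real.exp δ ≤ 1 := by
    have h1 : 1 - δ ≤ Real.exp (-δ) := by linarith [Real.add_one_le_exp (-δ)]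
    have h2 : Real.exp (-δ) * Real.exp δ = 1 := by rw [← Real.exp_add]; simp
    calc (1 - δ) * Real.exp δ ≤ Real.exp (-δ) * Real.exp δ :=
          mul_le_mul_of_nonneg_right h1 (Real.exp_pos δ).le
      _ = 1 := h2
  have hu0 : (0:ℝ) < 1 / (4 * x) := by positivity
  have hAle : A ≤ (1 - 1 / (4 * x)) * (1 - δ) := by
    have h3 : 1 / (2 * x) = 2 * (1 / (4 * x)) := by ring
    nlinarith [mul_nonneg hδ0.le hu0.le]
  have hr_le : r ≤ 1 - 1 / (4 * x) := by
    calc r = A * Real.exp δ := hr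
      _ ≤ ((1 - 1 / (4 * x)) * (1 - δ)) * Real.exp δ :=
          mul_le_mul_of_nonneg_right hAle (Real.exp_pos δ).le
      _ = (1 - 1 / (4 * x)) * ((1 - δ) * Real.exp δ) := by ring
      _ ≤ (1 - 1 / (4 * x)) * 1 := by
          apply mul_le_mul_of_nonneg_left hkey
          have h4 : 1 / (4 * x) ≤ 1 := by rw [div_le_one (by positivity)]; linarith
          linarith
      _ = 1 - 1 / (4 * x) := mul_one _
  have hr0 : 0 < r := by positivity
  have hr1 : r < 1 := lt_of_le_of_lt hr_le (by linarith)
  have hs : HasSum (fun n : ℕ => r ^ (n + 1) / ((n : ℝ) + 1)) (-Real.log (1 - r)) := by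
    have := Real.hasSum_pow_div_log_of_abs_lt_one (x := r) (abs_lt.mpr ⟨by linarith, hr1⟩)
    exact this
  have hterm : ∀ n : ℕ, A ^ (n + 1) / (2 * (x - 1) * ((n : ℝ) + 2) ^ ((x - 2) / (x - 1)))
      ≤ K / (2 * (x - 1)) * (r ^ (n + 1) / ((n : ℝ) + 1)) := by
    intro n
    set y : ℝ := (n : ℝ) + 2 with hy
    have hy0 : (0:ℝ) < y := by positivity
    have hsplit : y ^ ((x - 2) / (x - 1)) * y ^ ((1:ℝ) / (x - 1)) = y := by
      rw [← Real.rpow_add hy0, show (x - 2) / (x - 1) + 1 / (x - 1) = 1 by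
        field_simp; ring, Real.rpow_one]
    have hyle : y ^ ((1:ℝ) / (x - 1)) ≤ K * Real.exp δ ^ (n + 1) := by
      have hlog : Real.log y ≤ Real.log (x ^ 2) + y / x ^ 2 - 1 := by
        have h1 := Real.log_le_sub_one_of_pos (show (0:ℝ) < y / x ^ 2 by positivity)
        have h2 : Real.log (y / x ^ 2) = Real.log y - Real.log (x ^ 2) := by
          rw [Real.log_div (by positivity) (by positivity)]
        linarith
      have hKe : K * Real.exp δ ^ (n + 1)
          = Real.exp (Real.log (x ^ 2) * (1 / (x - 1)) + δ * y) := by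
        rw [hK, Real.rpow_def_of_pos (by positivity), ← Real.exp_nat_mul,
          ← Real.exp_add, ← Real.exp_add]
        congr 1
        rw [hy]
        push_cast
        ring
      rw [Real.rpow_def_of_pos hy0, hKe]
      apply Real.exp_le_exp.mpr
      have h1 : Real.log y * (1 / (x - 1)) ≤ (Real.log (x ^ 2) + y / x ^ 2) * (1 / (x - 1)) := by
        apply mul_le_mul_of_nonneg_right (by linarith) (by positivity)
      have h2 : (Real.log (x ^ 2) + y / x ^ 2) * (1 / (x - 1))
          = Real.log (x ^ 2) * (1 / (x - 1)) + δ * y := by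
        rw [hδ]; field_simp
      linarith
    have hstep1 : A ^ (n + 1) / (2 * (x - 1) * y ^ ((x - 2) / (x - 1)))
        = A ^ (n + 1) * y ^ ((1:ℝ) / (x - 1)) / (2 * (x - 1) * y) := by
      rw [show 2 * (x - 1) * y = 2 * (x - 1) * y ^ ((x - 2) / (x - 1)) * y ^ ((1:ℝ) / (x - 1)) by
        conv_lhs => rw [← hsplit]
        ring]
      rw [mul_div_mul_right _ _ (ne_of_gt (Real.rpow_pos_of_pos hy0 _))]
    rw [hstep1]
    calc A ^ (n + 1) * y ^ ((1:ℝ) / (x - 1)) / (2 * (x - 1) * y)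
        ≤ A ^ (n + 1) * (K * Real.exp δ ^ (n + 1)) / (2 * (x - 1) * ((n : ℝ) + 1)) := by
          apply div_le_div₀ (by positivity)
            (mul_le_mul_of_nonneg_left hyle (by positivity)) (by positivity)
          rw [hy]
          nlinarith
      _ = K / (2 * (x - 1)) * (r ^ (n + 1) / ((n : ℝ) + 1)) := by
          have hn1 : ((n:ℝ) + 1) ≠ 0 := by positivity
          rw [hr, mul_pow]
          field_simp
  have hsum_maj : Summable (fun n : ℕ => K / (2 * (x - 1)) * (r ^ (n + 1) / ((n : ℝ) + 1))) :=
    (hs.summable).mul_left _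
  have hsum_f : Summable (fun n : ℕ => A ^ (n + 1) /
      (2 * (x - 1) * ((n : ℝ) + 2) ^ ((x - 2) / (x - 1)))) := by
    apply Summable.of_nonneg_of_le (fun n => by positivity) hterm hsum_maj
  calc (∑' n : ℕ, A ^ (n + 1) / (2 * (x - 1) * ((n : ℝ) + 2) ^ ((x - 2) / (x - 1))))
      ≤ ∑' n : ℕ, K / (2 * (x - 1)) * (r ^ (n + 1) / ((n : ℝ) + 1)) :=
        Summable.tsum_le_tsum hterm hsum_f hsum_maj
    _ = K / (2 * (x - 1)) * (-Real.log (1 - r)) := (hs.mul_left _).tsum_eq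
    _ ≤ K / (2 * (x - 1)) * Real.log (4 * x) := by
        apply mul_le_mul_of_nonneg_left _ (by positivity)
        have h1r : 1 / (4 * x) ≤ 1 - r := by linarith
        have h1r0 : (0:ℝ) < 1 - r := by linarith
        rw [← Real.log_inv]
        apply Real.log_le_log (by positivity)
        rw [inv_le_comm₀ h1r0 (by positivity), inv_eq_one_div]
        exact h1r
    _ = K * Real.log (4 * x) / (2 * (x - 1)) := by ring
lemma tendsto_G : Tendsto (fun x : ℝ =>
    (2 * x / Real.log x) * (1 / (1 + 2 * (x - 1)) +
      (x ^ 2) ^ ((1:ℝ) / (x - 1)) * Real.exp (1 / ((x - 1) * x ^ 2)) * Real.log (4 * x) /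
        (2 * (x - 1)))) atTop (𝓝 1) := by
  have hlog : Tendsto Real.log atTop atTop := Real.tendsto_log_atTop
  have t2 : Tendsto (fun x : ℝ => (Real.log x)⁻¹) atTop (𝓝 0) := hlog.inv_tendsto_atTop
  have h2x : Tendsto (fun x : ℝ => 2 * x - 1) atTop atTop := by
    apply tendsto_atTop_add_const_right
    exact (tendsto_id (α := ℝ)).const_mul_atTop two_pos
  have t1 : Tendsto (fun x : ℝ => (2 * x - 1)⁻¹) atTop (𝓝 0) := h2x.inv_tendsto_atTop
  have hx1 : Tendsto (fun x : ℝ => x - 1) atTop atTop :=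
    tendsto_atTop_add_const_right _ _ tendsto_id
  have t3 : Tendsto (fun x : ℝ => (x - 1)⁻¹) atTop (𝓝 0) := hx1.inv_tendsto_atTop
  have t4 : Tendsto (fun x : ℝ => 2 * Real.log x / (x - 1)) atTop (𝓝 0) := by
    have := Real.tendsto_pow_log_div_mul_add_atTop 1 (-1) 1 one_ne_zero
    have h2 : Tendsto (fun x : ℝ => 2 * (Real.log x ^ 1 / (1 * x + -1))) atTop (𝓝 (2 * 0)) :=
      this.const_mul 2
    simp only [mul_zero] at h2
    refine h2.congr (fun x => ?_)
    ring_nf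
  have t5 : Tendsto (fun x : ℝ => ((x - 1) * x ^ 2)⁻¹) atTop (𝓝 0) := by
    apply Tendsto.inv_tendsto_atTop
    exact hx1.atTop_mul_atTop₀ (tendsto_pow_atTop two_ne_zero)
  have e4 : Tendsto (fun x : ℝ => Real.exp (2 * Real.log x / (x - 1))) atTop (𝓝 1) := by
    have := (Real.continuous_exp.tendsto 0).comp t4
    simpa [Function.comp_def] using this
  have e5 : Tendsto (fun x : ℝ => Real.exp (((x - 1) * x ^ 2)⁻¹)) atTop (𝓝 1) := by
    have := (Real.continuous_exp.tendsto 0).comp t5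
    simpa [Function.comp_def] using this
  have hH : Tendsto (fun x : ℝ =>
      (1 + (2 * x - 1)⁻¹) * (Real.log x)⁻¹ +
        (1 + (x - 1)⁻¹) * Real.exp (2 * Real.log x / (x - 1)) *
          Real.exp (((x - 1) * x ^ 2)⁻¹) * (1 + Real.log 4 * (Real.log x)⁻¹))
      atTop (𝓝 1) := by
    have l1 : Tendsto (fun x : ℝ => (1 + (2 * x - 1)⁻¹) * (Real.log x)⁻¹) atTop (𝓝 0) := by
      have := ((tendsto_const_nhds (x := (1:ℝ)) (f := atTop (α := ℝ))).add t1).mul t2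
      simpa using this
    have l2 : Tendsto (fun x : ℝ => (1 + (x - 1)⁻¹) * Real.exp (2 * Real.log x / (x - 1)) *
        Real.exp (((x - 1) * x ^ 2)⁻¹) * (1 + Real.log 4 * (Real.log x)⁻¹)) atTop (𝓝 1) := by
      have := ((((tendsto_const_nhds (x := (1:ℝ)) (f := atTop (α := ℝ))).add t3).mul e4).mul e5).mul
        ((tendsto_const_nhds (x := (1:ℝ)) (f := atTop (α := ℝ))).add ((tendsto_const_nhds (x := Real.log 4) (f := atTop (α := ℝ))).mul t2))
      simpa using this
    have := l1.add l2
    simpa using this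
  refine hH.congr' ?_
  filter_upwards [eventually_ge_atTop (3:ℝ)] with x hx
  have hx0 : (0:ℝ) < x := by linarith
  have hx1' : (0:ℝ) < x - 1 := by linarith
  have hL : (0:ℝ) < Real.log x := Real.log_pos (by linarith)
  have h2x1 : (0:ℝ) < 2 * x - 1 := by linarith
  have hrpow : (x ^ 2) ^ ((1:ℝ) / (x - 1)) = Real.exp (2 * Real.log x / (x - 1)) := by
    rw [Real.rpow_def_of_pos (by positivity), Real.log_pow]
    congr 1
    push_cast
    ring
  have hlog4 : Real.log (4 * x) = Real.log 4 + Real.log x :=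
    Real.log_mul (by norm_num) (by positivity)
  rw [hrpow, hlog4]
  have hden : 1 + 2 * (x - 1) = 2 * x - 1 := by ring
  rw [hden]
  field_simp
  ring

theorem stmt8 :
    Filter.limsup (fun d : ℕ =>
        (2 * (d : ℝ) / Real.log d) *
          (1 / (1 + 2 * ((d : ℝ) - 1)) +
            ∑' n : ℕ, (1 - 1 / (2 * (d : ℝ))) ^ (n + 1) /
              (2 * ((d : ℝ) - 1) * ((n : ℝ) + 2) ^ (((d : ℝ) - 2) / ((d : ℝ) - 1)))))
      atTop ≤ 1 := by
  set G : ℝ → ℝ := fun x =>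
    (2 * x / Real.log x) * (1 / (1 + 2 * (x - 1)) +
      (x ^ 2) ^ ((1:ℝ) / (x - 1)) * Real.exp (1 / ((x - 1) * x ^ 2)) * Real.log (4 * x) /
        (2 * (x - 1))) with hGdef
  have hfg : ∀ᶠ d : ℕ in atTop,
      (2 * (d : ℝ) / Real.log d) *
          (1 / (1 + 2 * ((d : ℝ) - 1)) +
            ∑' n : ℕ, (1 - 1 / (2 * (d : ℝ))) ^ (n + 1) /
              (2 * ((d : ℝ) - 1) * ((n : ℝ) + 2) ^ (((d : ℝ) - 2) / ((d : ℝ) - 1))))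
        ≤ G (d : ℝ) := by
    filter_upwards [eventually_ge_atTop 3] with d hd
    have hx : (3:ℝ) ≤ (d : ℝ) := by exact_mod_cast hd
    have hL : (0:ℝ) ≤ Real.log d := Real.log_nonneg (by linarith)
    exact mul_le_mul_of_nonneg_left (add_le_add_right (sum_bound hx) _) (by positivity)
  have hnonneg : ∀ᶠ d : ℕ in atTop, (0:ℝ) ≤
      (2 * (d : ℝ) / Real.log d) *
          (1 / (1 + 2 * ((d : ℝ) - 1)) +
            ∑' n : ℕ, (1 - 1 / (2 * (d : ℝ))) ^ (n + 1) /
              (2 * ((d : ℝ) - 1) * ((n : ℝ) + 2) ^ (((d : ℝ) - 2) / ((d : ℝ) - 1)))) := by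
    filter_upwards [eventually_ge_atTop 3] with d hd
    have hx : (3:ℝ) ≤ (d : ℝ) := by exact_mod_cast hd
    have hL : (0:ℝ) ≤ Real.log d := Real.log_nonneg (by linarith)
    have hA0 : (0:ℝ) ≤ 1 - 1 / (2 * (d:ℝ)) := by
      have : 1 / (2 * (d:ℝ)) ≤ 1 := by rw [div_le_one (by linarith)]; linarith
      linarith
    apply mul_nonneg (div_nonneg (by positivity) hL)
    apply add_nonneg (div_nonneg zero_le_one (by linarith))
    apply tsum_nonneg
    intro n
    have h1 : (0:ℝ) < (n:ℝ) + 2 := by positivity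
    have h2 : (0:ℝ) ≤ 2 * ((d:ℝ) - 1) * ((n:ℝ) + 2) ^ (((d:ℝ) - 2) / ((d:ℝ) - 1)) := by
      have := Real.rpow_pos_of_pos h1 (((d:ℝ) - 2) / ((d:ℝ) - 1))
      nlinarith
    exact div_nonneg (pow_nonneg hA0 _) h2
  have hG : Tendsto (fun d : ℕ => G (d : ℝ)) atTop (𝓝 1) :=
    tendsto_G.comp tendsto_natCast_atTop_atTop
  calc Filter.limsup _ atTop
      ≤ Filter.limsup (fun d : ℕ => G (d : ℝ)) atTop := by
        exact Filter.limsup_le_limsup hfg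
          (Filter.isCoboundedUnder_le_of_eventually_le atTop hnonneg)
          hG.isBoundedUnder_le
    _ = 1 := hG.limsup_eq
end

section
/- Let $A_d = 1 - \frac{1}{2d}$ and $s^{(d)}_n = 2(d-1) n^{\frac{d-2}{d-1}}$. Then $\limsup_{d\to\infty} \left(\frac{2d}{\log d}\right)^2 \cdot 2\sum_{k=1}^{\infty} \frac{1}{k + s^{(d)}_k} \sum_{n=k}^{\infty} \frac{A_d^{n-1}}{n + s^{(d)}_n} \leq 1$. -/
open Real Filter Topology

namespace Stmt9aux
noncomputable section

variable (d : ℕ)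

def D : ℝ := d
def A : ℝ := 1 - 1/(2*D d)
def pw : ℝ := (D d - 2)/(D d - 1)
def w (i : ℕ) : ℝ := ((i:ℝ)+1) + 2*(D d - 1)*((i:ℝ)+1)^(pw d)
def r : ℝ := Real.sqrt (A d)
def a (i : ℕ) : ℝ := (r d)^i / w d i
def dl : ℝ := 1/((D d)^2*(D d - 1))
def ρ : ℝ := r d * Real.exp (dl d)
def c : ℝ := Real.exp (2*Real.log (D d)/(D d - 1)) * Real.exp (dl d) / (2*(D d - 1))
def B : ℝ := c d * (1/ρ d) * Real.log (8 * D d)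
def h : ℝ := ((2*D d/Real.log (D d)) * B d)^2 + (2*D d/Real.log (D d))^2 * (B d/(2*D d - 1))
def t (k : ℕ) : ℝ := ∑' m, a d (m + k)
def S : ℝ := ∑' i, a d i
def Q : ℝ := ∑' i, (a d i)^2

variable {d} (hd : 10 ≤ d)

include hd

lemma hD : 10 ≤ D d := by unfold D; exact_mod_cast hd
lemma hA0 : 0 < A d := by
  have h := hD hd
  have h2 : (0:ℝ) < 2*D d := by linarith
  have h3 : 1/(2*D d) ≤ 1/2 := by rw [div_le_div_iff₀ h2 two_pos]; linarith
  unfold A; linarith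
lemma hA1 : A d < 1 := by
  have h := hD hd
  have : 0 < 1/(2*D d) := by positivity
  unfold A; linarith
lemma hr0 : 0 < r d := Real.sqrt_pos.2 (hA0 hd)
lemma hr1 : r d < 1 := by
  have := hA0 hd
  unfold r; rw [show (1:ℝ) = Real.sqrt 1 by simp]
  exact Real.sqrt_lt_sqrt (le_of_lt this) (hA1 hd)
lemma hpw0 : 0 ≤ pw d := by have := hD hd; unfold pw; apply div_nonneg <;> linarith
lemma hw1 (i : ℕ) : 1 ≤ w d i := by
  have hD' := hD hd
  have h1 : (1:ℝ) ≤ (i:ℝ)+1 := by have := Nat.cast_nonneg (α:=ℝ) i; linarith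
  have h2 : (0:ℝ) ≤ 2*(D d - 1)*((i:ℝ)+1)^(pw d) := mul_nonneg (by linarith) (Real.rpow_nonneg (by positivity) _)
  unfold w; linarith
lemma hw0 (i : ℕ) : 0 < w d i := lt_of_lt_of_le one_pos (hw1 hd i)
lemma hw00 (i : ℕ) : w d 0 ≤ w d i := by
  have hD' := hD hd
  have h1 : (1:ℝ) ≤ (i:ℝ)+1 := by have := Nat.cast_nonneg (α:=ℝ) i; linarith
  have h2 : (1:ℝ) ≤ ((i:ℝ)+1)^(pw d) := Real.one_le_rpow h1 (hpw0 hd)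
  have h3 : (0:ℝ) ≤ 2*(D d - 1) := by linarith
  unfold w
  simp only [Nat.cast_zero, zero_add, Real.one_rpow]
  nlinarith
lemma ha_nonneg (i : ℕ) : 0 ≤ a d i := by
  have := hw0 hd i; have := hr0 hd; unfold a; positivity
lemma ha_le (i : ℕ) : a d i ≤ (r d)^i :=
  div_le_self (by have := hr0 hd; positivity) (hw1 hd i)
lemma hsum_a : Summable (a d) :=
  Summable.of_nonneg_of_le (ha_nonneg hd) (ha_le hd)
    (summable_geometric_of_lt_one (le_of_lt (hr0 hd)) (hr1 hd))

lemma ht_eq (k : ℕ) : (∑ i ∈ Finset.range k, a d i) + t d k = S d :=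
  Summable.sum_add_tsum_nat_add k (hsum_a hd)

lemma ht_nonneg (k : ℕ) : 0 ≤ t d k := tsum_nonneg (fun m => ha_nonneg hd _)

lemma ht_sub (k : ℕ) : t d k - t d (k+1) = a d k := by
  have h1 := ht_eq hd (d := d) k
  have h2 := ht_eq hd (d := d) (k+1)
  rw [Finset.sum_range_succ] at h2
  linarith

lemma ht_tendsto : Tendsto (t d) atTop (𝓝 0) := by
  have h1 : Tendsto (fun k => ∑ i ∈ Finset.range k, a d i) atTop (𝓝 (S d)) :=
    (hsum_a hd).hasSum.tendsto_sum_nat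
  have h2 : (t d) = fun k => S d - ∑ i ∈ Finset.range k, a d i := by
    funext k; have := ht_eq hd (d := d) k; linarith
  rw [h2]
  simpa using (tendsto_const_nhds (x := S d)).sub h1

lemma hQ_sum : Summable (fun i => (a d i)^2) := by
  apply Summable.of_nonneg_of_le (fun i => sq_nonneg _) _ (hsum_a hd)
  intro i
  have h1 := ha_nonneg hd (d := d) i
  have h2 : a d i ≤ 1 := le_trans (ha_le hd i) (pow_le_one₀ (le_of_lt (hr0 hd)) (le_of_lt (hr1 hd)))
  nlinarith

lemma htel : HasSum (fun k => (t d k)^2 - (t d (k+1))^2) ((t d 0)^2) := by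
  rw [hasSum_iff_tendsto_nat_of_nonneg]
  · have h1 : ∀ n, ∑ k ∈ Finset.range n, ((t d k)^2 - (t d (k+1))^2) = (t d 0)^2 - (t d n)^2 :=
      fun n => Finset.sum_range_sub' (fun k => (t d k)^2) n
    simp only [h1]
    have h2 : Tendsto (fun n => (t d n)^2) atTop (𝓝 0) := by
      simpa using ((ht_tendsto hd (d := d)).pow 2)
    simpa using (tendsto_const_nhds (x := (t d 0)^2)).sub h2
  · intro k
    have h3 := ht_sub hd (d := d) k
    have h4 := ha_nonneg hd (d := d) k
    have h5 := ht_nonneg hd (d := d) (k+1)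
    nlinarith

lemma ht0 : t d 0 = S d := by
  unfold t S; exact tsum_congr (fun m => by rw [Nat.add_zero])

lemma hat_hasSum : HasSum (fun k => a d k * t d k) (((S d)^2 + Q d)/2) := by
  have h1 : (fun k => a d k * t d k)
      = fun k => ((t d k)^2 - (t d (k+1))^2)/2 + (a d k)^2/2 := by
    funext k
    have h3 := ht_sub hd (d := d) k
    have h4 : t d (k+1) = t d k - a d k := by linarith
    rw [h4]; ring
  rw [h1]
  have h2 := ((htel hd (d := d)).div_const 2).add (((hQ_sum hd (d := d)).hasSum).div_const 2)
  rw [ht0 hd] at h2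
  convert h2 using 1
  · rfl
  unfold Q; ring

lemma hsum_ashift (k : ℕ) : Summable (fun m => a d (k+m)) :=
  Summable.congr ((summable_nat_add_iff k).mpr (hsum_a hd)) (fun m => by rw [add_comm])

lemma hinner (k : ℕ) : ∑' m, (A d)^(k+m) / w d (k+m) ≤ (r d)^k * t d k := by
  have hrhs : Summable (fun m => (r d)^k * a d (k+m)) := (hsum_ashift hd k).mul_left _
  have hterm : ∀ m, (A d)^(k+m)/w d (k+m) ≤ (r d)^k * a d (k+m) := by
    intro m
    have hnum : (A d)^(k+m) ≤ (r d)^k * (r d)^(k+m) := by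
      have hA : A d = (r d)^2 := (Real.sq_sqrt (hA0 hd).le).symm
      rw [hA, ← pow_mul, ← pow_add]
      exact pow_le_pow_of_le_one (hr0 hd).le (hr1 hd).le (by omega)
    calc (A d)^(k+m)/w d (k+m) ≤ ((r d)^k * (r d)^(k+m))/w d (k+m) := by
          gcongr
          exact (hw0 hd _).le
      _ = (r d)^k * a d (k+m) := by unfold a; ring
  have hlhs : Summable (fun m => (A d)^(k+m)/w d (k+m)) := by
    apply Summable.of_nonneg_of_le _ hterm hrhs
    intro m
    have h1 := (hA0 hd (d := d)).le
    have h2 := (hw0 hd (d := d) (k+m)).le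
    positivity
  calc ∑' m, (A d)^(k+m)/w d (k+m) ≤ ∑' m, (r d)^k * a d (k+m) :=
        Summable.tsum_le_tsum hterm hlhs hrhs
    _ = (r d)^k * ∑' m, a d (k+m) := tsum_mul_left
    _ = (r d)^k * t d k := by
        congr 1
        exact tsum_congr (fun m => by rw [add_comm])

lemma hinner_nonneg (k : ℕ) : 0 ≤ ∑' m, (A d)^(k+m) / w d (k+m) := by
  apply tsum_nonneg
  intro m
  have h1 := (hA0 hd (d := d)).le
  have h2 := (hw0 hd (d := d) (k+m)).le
  positivity

lemma hds : 2*(∑' k, (1/w d k) * ∑' m, (A d)^(k+m)/w d (k+m)) ≤ (S d)^2 + Q d := by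
  have hterm : ∀ k, (1/w d k) * (∑' m, (A d)^(k+m)/w d (k+m)) ≤ a d k * t d k := by
    intro k
    have h1 : (1/w d k) * (∑' m, (A d)^(k+m)/w d (k+m)) ≤ (1/w d k) * ((r d)^k * t d k) :=
      mul_le_mul_of_nonneg_left (hinner hd k) (by have := (hw0 hd (d := d) k).le; positivity)
    calc _ ≤ (1/w d k) * ((r d)^k * t d k) := h1
      _ = a d k * t d k := by unfold a; ring
  have hlhs : Summable (fun k => (1/w d k) * ∑' m, (A d)^(k+m)/w d (k+m)) := by
    apply Summable.of_nonneg_of_le _ hterm (hat_hasSum hd).summable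
    intro k
    exact mul_nonneg (by have := (hw0 hd (d := d) k).le; positivity) (hinner_nonneg hd k)
  have h2 : ∑' k, (1/w d k) * ∑' m, (A d)^(k+m)/w d (k+m) ≤ ((S d)^2 + Q d)/2 := by
    calc _ ≤ ∑' k, a d k * t d k := Summable.tsum_le_tsum hterm hlhs (hat_hasSum hd).summable
      _ = ((S d)^2 + Q d)/2 := (hat_hasSum hd).tsum_eq
  linarith

lemma ha0_eq : a d 0 = 1/(2*D d - 1) := by
  have hD' := hD hd
  unfold a w
  norm_num [Real.one_rpow]
  ring_nf

lemma ha_le_a0 (i : ℕ) : a d i ≤ 1/(2*D d - 1) := by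
  rw [← ha0_eq hd]
  unfold a
  have h1 : (r d)^i ≤ (r d)^0 := pow_le_pow_of_le_one (hr0 hd).le (hr1 hd).le (Nat.zero_le i)
  have h2 := hw00 hd (d := d) i
  have h3 := hw0 hd (d := d) 0
  have h4 := hw0 hd (d := d) i
  have h5 : (0:ℝ) ≤ (r d)^i := by have := (hr0 hd (d:=d)).le; positivity
  calc (r d)^i / w d i ≤ (r d)^i / w d 0 := by gcongr
    _ ≤ (r d)^0 / w d 0 := by gcongr
    _ = a d 0 := rfl

lemma hQ_le : Q d ≤ (1/(2*D d - 1)) * S d := by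
  unfold Q S
  rw [← tsum_mul_left]
  apply Summable.tsum_le_tsum _ (hQ_sum hd) ((hsum_a hd).mul_left _)
  intro i
  have h1 := ha_le_a0 hd (d := d) i
  have h2 := ha_nonneg hd (d := d) i
  calc (a d i)^2 = a d i * a d i := sq (a d i) ▸ rfl
    _ ≤ (1/(2*D d -1)) * a d i := mul_le_mul_of_nonneg_right h1 h2

lemma hdl0 : 0 < dl d := by
  have := hD hd; unfold dl; apply div_pos one_pos; nlinarith

lemma hdl_small : 2 * dl d ≤ 1/(8*D d) := by
  have hD' := hD hd
  have h1 : 16*(D d) ≤ (D d)^2*(D d - 1) := by nlinarith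
  have h2 : (0:ℝ) < 8*D d := by linarith
  have h3 : (0:ℝ) < (D d)^2*(D d -1) := by nlinarith
  unfold dl
  rw [show (2:ℝ)*(1/((D d)^2*(D d - 1))) = 2/((D d)^2*(D d -1)) by ring,
    div_le_div_iff₀ h3 h2]
  nlinarith

lemma hρ0 : 0 < ρ d := mul_pos (hr0 hd) (Real.exp_pos _)

lemma hρle : ρ d ≤ 1 - 1/(8*D d) := by
  have hD' := hD hd
  have hr : r d ≤ 1 - 1/(4*D d) := by
    have h1 : A d ≤ (1 - 1/(4*D d))^2 := by
      unfold A
      have : (0:ℝ) < D d := by linarith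
      field_simp
      nlinarith
    calc r d ≤ Real.sqrt ((1 - 1/(4*D d))^2) := Real.sqrt_le_sqrt h1
      _ = 1 - 1/(4*D d) := Real.sqrt_sq (by rw [sub_nonneg, div_le_one (by linarith)]; linarith)
  have hdl1 : dl d < 1 := by
    have h := hdl_small hd (d := d)
    have h2 : (0:ℝ) < 8*D d := by linarith
    have h3 : 1/(8*D d) ≤ 1 := by rw [div_le_one h2]; linarith
    have h4 := hdl0 hd (d := d)
    linarith
  have hdl2 : dl d ≤ 1/4 := by
    have hds := hdl_small hd (d := d)
    have h2 : (0:ℝ) < 8*D d := by linarith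
    have h3 : 1/(8*D d) ≤ 1/2 := by rw [div_le_div_iff₀ h2 two_pos]; linarith
    linarith
  have hexp : Real.exp (dl d) ≤ 1 + 2*dl d := by
    have h1 : 1 - dl d ≤ Real.exp (-dl d) := by
      have := Real.add_one_le_exp (-dl d); linarith
    have h2 : Real.exp (-dl d) = 1/Real.exp (dl d) := by
      rw [Real.exp_neg]; ring
    rw [h2] at h1
    have h3 : 0 < Real.exp (dl d) := Real.exp_pos _
    have h4 := hdl0 hd (d := d)
    have h5 : (1 - dl d) * Real.exp (dl d) ≤ 1 := by
      calc (1 - dl d) * Real.exp (dl d) ≤ (1/Real.exp (dl d)) * Real.exp (dl d) :=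
            mul_le_mul_of_nonneg_right h1 h3.le
        _ = 1 := by field_simp
    nlinarith [h5, h4, hdl2, h3]
  have h0r : 0 ≤ r d := (hr0 hd).le
  have hds := hdl_small hd (d := d)
  have h4 := (hdl0 hd (d := d)).le
  calc ρ d = r d * Real.exp (dl d) := rfl
    _ ≤ (1 - 1/(4*D d)) * (1 + 2*dl d) := by
        apply mul_le_mul hr hexp (Real.exp_pos _).le
        rw [sub_nonneg, div_le_one (by linarith)]; linarith
    _ ≤ 1 - 1/(8*D d) := by
        have h5 : (0:ℝ) < 4*D d := by linarith
        have h6 : 1/(8*D d) = (1/(4*D d))/2 := by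
          rw [div_div]; congr 1; ring
        have h7 : 0 < 1/(4*D d) := by positivity
        nlinarith [hds, mul_nonneg h7.le h4, h6]

lemma hρ1 : ρ d < 1 := by
  have h := hρle hd (d := d)
  have hD' := hD hd
  have : (0:ℝ) < 1/(8*D d) := by positivity
  linarith

lemma hlog_series : HasSum (fun i : ℕ => (ρ d)^i/((i:ℝ)+1)) (-Real.log (1-ρ d)/ρ d) := by
  have habs : |ρ d| < 1 := by
    rw [abs_of_pos (hρ0 hd)]; exact hρ1 hd
  have h1 := Real.hasSum_pow_div_log_of_abs_lt_one habs
  have h2 : (fun n : ℕ => (ρ d)^(n+1)/((n:ℝ)+1)) = fun n : ℕ => ρ d * ((ρ d)^n/((n:ℝ)+1)) := by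
    funext n; rw [pow_succ]; ring
  rw [h2] at h1
  have h3 := h1.div_const (ρ d)
  have h4 : (fun n : ℕ => (ρ d * ((ρ d)^n/((n:ℝ)+1)))/ρ d) = fun n : ℕ => (ρ d)^n/((n:ℝ)+1) := by
    funext n
    rw [mul_comm, mul_div_assoc, div_self (hρ0 hd).ne', mul_one]
  rwa [h4] at h3

lemma hc0 : 0 < c d := by
  have hD' := hD hd
  have h1 : (0:ℝ) < D d - 1 := by linarith
  unfold c; positivity

lemma hstep (i : ℕ) : a d i ≤ c d * ((ρ d)^i/((i:ℝ)+1)) := by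
  have hD' := hD hd
  set x : ℝ := (i:ℝ)+1 with hxdef
  have hx0 : (0:ℝ) < x := by positivity
  have hx1 : (1:ℝ) ≤ x := by
    rw [hxdef]; have := Nat.cast_nonneg (α := ℝ) i; linarith
  have hD0 : D d ≠ 0 := by linarith
  have hD1 : D d - 1 ≠ 0 := by linarith
  have hpw_eq : pw d = 1 - 1/(D d - 1) := by
    unfold pw; field_simp; ring
  have h2 : x ^ (pw d) = x / x^(1/(D d -1)) := by
    rw [hpw_eq, Real.rpow_sub hx0, Real.rpow_one]
  -- log x ≤ 2 log D + x/D^2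
  have hlogx : Real.log x ≤ 2*Real.log (D d) + x/(D d)^2 := by
    have hD2 : (0:ℝ) < (D d)^2 := by positivity
    have h3 : Real.log (x/(D d)^2) ≤ x/(D d)^2 - 1 :=
      Real.log_le_sub_one_of_pos (div_pos hx0 hD2)
    rw [Real.log_div hx0.ne' hD2.ne'] at h3
    have h4 : Real.log ((D d)^2) = 2*Real.log (D d) := by
      rw [Real.log_pow]; push_cast; ring
    linarith [h3, h4 ▸ h3]
  have hG : x^(1/(D d -1)) ≤ Real.exp (2*Real.log (D d)/(D d -1)) * Real.exp (x * dl d) := by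
    rw [← Real.exp_add, Real.rpow_def_of_pos hx0]
    apply Real.exp_le_exp.2
    have h5 : (0:ℝ) ≤ 1/(D d -1) := le_of_lt (div_pos one_pos (by linarith))
    have h6 : Real.log x * (1/(D d -1)) ≤ (2*Real.log (D d) + x/(D d)^2) * (1/(D d -1)) :=
      mul_le_mul_of_nonneg_right hlogx h5
    calc Real.log x * (1/(D d - 1)) ≤ (2*Real.log (D d) + x/(D d)^2) * (1/(D d -1)) := h6
      _ = 2*Real.log (D d)/(D d -1) + x * dl d := by
          unfold dl; field_simp
  set G : ℝ := Real.exp (2*Real.log (D d)/(D d -1)) * Real.exp (x * dl d) with hGdef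
  have hG0 : 0 < G := by positivity
  have hxr0 : 0 < x^(1/(D d -1)) := Real.rpow_pos_of_pos hx0 _
  have hP0 : (0:ℝ) < 2*(D d -1)*x := by nlinarith
  have hwlow : 2*(D d -1)*x / G ≤ w d i := by
    have h7 : 2*(D d -1)*x / G ≤ 2*(D d -1)*x / x^(1/(D d-1)) :=
      div_le_div_of_nonneg_left hP0.le hxr0 hG
    have h8 : 2*(D d -1)*x / x^(1/(D d -1)) = 2*(D d -1)*(x^(pw d)) := by
      rw [h2]; ring
    have h9 : 2*(D d -1)*(x^(pw d)) ≤ w d i := by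
      unfold w
      have : (0:ℝ) ≤ (i:ℝ)+1 := by positivity
      rw [← hxdef]; linarith
    linarith
  have halow : a d i ≤ (r d)^i * G / (2*(D d -1)*x) := by
    unfold a
    have hri : (0:ℝ) ≤ (r d)^i := pow_nonneg (hr0 hd).le i
    have hw' := hw0 hd (d := d) i
    have hPG : (0:ℝ) < 2*(D d-1)*x/G := div_pos hP0 hG0
    calc (r d)^i / w d i ≤ (r d)^i / (2*(D d -1)*x/G) :=
          div_le_div_of_nonneg_left hri hPG hwlow
      _ = (r d)^i * G / (2*(D d -1)*x) := by field_simp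
  have hfinal : (r d)^i * G / (2*(D d -1)*x) = c d * ((ρ d)^i/x) := by
    have hexpand : Real.exp (x * dl d) = Real.exp (dl d) * (Real.exp (dl d))^i := by
      rw [hxdef]
      rw [show ((i:ℝ)+1) * dl d = (i:ℝ) * dl d + dl d by ring, Real.exp_add]
      rw [← Real.exp_nat_mul]
      ring
    rw [hGdef, hexpand]
    unfold c ρ
    rw [mul_pow]
    field_simp
  rw [hfinal] at halow
  exact halow

lemma hS_nonneg : 0 ≤ S d := tsum_nonneg (fun i => ha_nonneg hd i)

lemma hS_le : S d ≤ B d := by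
  have hD' := hD hd
  have hsum_rhs : Summable (fun i : ℕ => c d * ((ρ d)^i/((i:ℝ)+1))) :=
    (hlog_series hd).summable.mul_left _
  have h1 : S d ≤ ∑' i : ℕ, c d * ((ρ d)^i/((i:ℝ)+1)) :=
    Summable.tsum_le_tsum (hstep hd) (hsum_a hd) hsum_rhs
  have h2 : ∑' i : ℕ, c d * ((ρ d)^i/((i:ℝ)+1)) = c d * (-Real.log (1-ρ d)/ρ d) := by
    rw [tsum_mul_left, (hlog_series hd).tsum_eq]
  have h3 : -Real.log (1-ρ d) ≤ Real.log (8*D d) := by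
    have h4 : 1/(8*D d) ≤ 1 - ρ d := by
      have := hρle hd (d := d); linarith
    have h5 : (0:ℝ) < 1/(8*D d) := div_pos one_pos (by linarith)
    have h6 : (1 - ρ d)⁻¹ ≤ 8*D d := by
      rw [inv_le_comm₀ (by linarith) (by linarith)]
      calc (8*D d)⁻¹ = 1/(8*D d) := by rw [one_div]
        _ ≤ 1 - ρ d := h4
    calc -Real.log (1-ρ d) = Real.log ((1-ρ d)⁻¹) := (Real.log_inv _).symm
      _ ≤ Real.log (8*D d) := Real.log_le_log (inv_pos.2 (by linarith)) h6
  have hρ0' := hρ0 hd (d := d)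
  have hc0' := hc0 hd (d := d)
  calc S d ≤ c d * (-Real.log (1-ρ d)/ρ d) := h1.trans (le_of_eq h2)
    _ ≤ c d * (Real.log (8*D d)/ρ d) := by
        apply mul_le_mul_of_nonneg_left _ hc0'.le
        have := mul_le_mul_of_nonneg_right h3 (inv_nonneg.2 hρ0'.le)
        simpa [div_eq_mul_inv] using this
    _ = B d := by unfold B; ring

lemma hB_nonneg : 0 ≤ B d := (hS_nonneg hd).trans (hS_le hd)

lemma hf_le_h :
    (2*D d/Real.log (D d))^2 * (2*(∑' k, (1/w d k) * ∑' m, (A d)^(k+m)/w d (k+m))) ≤ h d := by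
  have hD' := hD hd
  have h1 := hds hd (d := d)
  have h2 := hQ_le hd (d := d)
  have hSB := hS_le hd (d := d)
  have hS0 := hS_nonneg hd (d := d)
  have hB0 := hB_nonneg hd (d := d)
  have h2D : (0:ℝ) < 2*D d - 1 := by linarith
  have hsq : (S d)^2 ≤ (B d)^2 := pow_le_pow_left₀ hS0 hSB 2
  have h3 : (1/(2*D d -1)) * S d ≤ B d/(2*D d -1) := by
    calc (1/(2*D d -1)) * S d ≤ (1/(2*D d -1)) * B d :=
          mul_le_mul_of_nonneg_left hSB (le_of_lt (div_pos one_pos h2D))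
      _ = B d/(2*D d -1) := by ring
  have hinner : 2*(∑' k, (1/w d k) * ∑' m, (A d)^(k+m)/w d (k+m)) ≤ (B d)^2 + B d/(2*D d -1) := by
    linarith
  have hnn : (0:ℝ) ≤ (2*D d/Real.log (D d))^2 := sq_nonneg _
  calc (2*D d/Real.log (D d))^2 * (2*(∑' k, (1/w d k) * ∑' m, (A d)^(k+m)/w d (k+m)))
      ≤ (2*D d/Real.log (D d))^2 * ((B d)^2 + B d/(2*D d -1)) :=
        mul_le_mul_of_nonneg_left hinner hnn
    _ = h d := by unfold h; ring

lemma hf_nonneg :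
    0 ≤ (2*D d/Real.log (D d))^2 * (2*(∑' k, (1/w d k) * ∑' m, (A d)^(k+m)/w d (k+m))) := by
  apply mul_nonneg (sq_nonneg _)
  apply mul_nonneg (by norm_num)
  apply tsum_nonneg
  intro k
  exact mul_nonneg (le_of_lt (div_pos one_pos (hw0 hd k))) (hinner_nonneg hd k)

omit hd

lemma hDtendsto : Tendsto (fun d : ℕ => D d) atTop atTop := tendsto_natCast_atTop_atTop

lemma hlogD : Tendsto (fun d : ℕ => Real.log (D d)) atTop atTop :=
  Real.tendsto_log_atTop.comp hDtendsto

lemma hElim : Tendsto (fun d : ℕ => Real.exp (2*Real.log (D d)/(D d - 1))) atTop (𝓝 1) := by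
  have h1 : Tendsto (fun x : ℝ => Real.log x/(1*x + (-1))) atTop (𝓝 0) := by
    simpa using Real.tendsto_pow_log_div_mul_add_atTop 1 (-1) 1 one_ne_zero
  have h2 : Tendsto (fun d : ℕ => Real.log (D d)/(D d - 1)) atTop (𝓝 0) := by
    have := h1.comp hDtendsto
    simpa [Function.comp_def, sub_eq_add_neg] using this
  have h3 : Tendsto (fun d : ℕ => 2*Real.log (D d)/(D d - 1)) atTop (𝓝 0) := by
    have := h2.const_mul 2
    simpa [mul_div_assoc] using this
  have := (Real.continuous_exp.tendsto 0).comp h3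
  simpa [Function.comp_def] using this

lemma hDinv : Tendsto (fun d : ℕ => (D d)⁻¹) atTop (𝓝 0) :=
  tendsto_inv_atTop_zero.comp hDtendsto

lemma hdllim : Tendsto (fun d : ℕ => dl d) atTop (𝓝 0) := by
  apply tendsto_of_tendsto_of_tendsto_of_le_of_le' tendsto_const_nhds hDinv
  · filter_upwards [eventually_ge_atTop 10] with d hd
    exact (hdl0 hd).le
  · filter_upwards [eventually_ge_atTop 10] with d hd
    have hD' := hD hd
    have h1 : D d ≤ (D d)^2*(D d -1) := by nlinarith
    have h2 : (0:ℝ) < D d := by linarith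
    unfold dl
    rw [one_div]
    exact inv_anti₀ h2 h1

lemma hedl : Tendsto (fun d : ℕ => Real.exp (dl d)) atTop (𝓝 1) := by
  have := (Real.continuous_exp.tendsto 0).comp hdllim
  simpa [Function.comp_def] using this

lemma hrlim : Tendsto (fun d : ℕ => r d) atTop (𝓝 1) := by
  have hA : Tendsto (fun d : ℕ => A d) atTop (𝓝 1) := by
    have h2 : Tendsto (fun d : ℕ => (2*D d)) atTop atTop :=
      Tendsto.const_mul_atTop two_pos hDtendsto
    have h1 : Tendsto (fun d : ℕ => 1/(2*D d)) atTop (𝓝 0) := by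
      have h3 := tendsto_inv_atTop_zero.comp h2
      simp only [Function.comp_def] at h3
      apply h3.congr
      intro d
      simp [Function.comp, one_div]
    have := (tendsto_const_nhds (x := (1:ℝ)) (f := atTop (α := ℕ))).sub h1
    simpa [A] using this
  have := (Real.continuous_sqrt.tendsto 1).comp hA
  simpa [r, Function.comp_def] using this

lemma hρlim : Tendsto (fun d : ℕ => ρ d) atTop (𝓝 1) := by
  have := hrlim.mul hedl
  simpa [ρ] using this

lemma hρinv : Tendsto (fun d : ℕ => (ρ d)⁻¹) atTop (𝓝 1) := by
  simpa using hρlim.inv₀ one_ne_zero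

lemma hDfrac : Tendsto (fun d : ℕ => D d/(D d - 1)) atTop (𝓝 1) := by
  have h1 : Tendsto (fun d : ℕ => (D d - 1)) atTop atTop :=
    tendsto_atTop_add_const_right atTop (-1) hDtendsto |>.congr (fun d => by ring_nf)
  have h2 : Tendsto (fun d : ℕ => 1 + (D d - 1)⁻¹) atTop (𝓝 1) := by
    have := (tendsto_const_nhds (x := (1:ℝ)) (f := atTop (α := ℕ))).add
      (tendsto_inv_atTop_zero.comp h1)
    simpa using this
  apply h2.congr'
  filter_upwards [eventually_ge_atTop 10] with d hd
  have hD' := hD hd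
  have : D d - 1 ≠ 0 := by linarith
  field_simp
  ring

lemma hlog8 : Tendsto (fun d : ℕ => Real.log (8*D d)/Real.log (D d)) atTop (𝓝 1) := by
  have h1 : Tendsto (fun d : ℕ => Real.log 8 * (Real.log (D d))⁻¹ + 1) atTop (𝓝 1) := by
    have := ((tendsto_inv_atTop_zero.comp hlogD).const_mul (Real.log 8)).add
      (tendsto_const_nhds (x := (1:ℝ)))
    simpa using this
  apply h1.congr'
  filter_upwards [eventually_ge_atTop 10] with d hd
  have hD' := hD hd
  have hD0 : (0:ℝ) < D d := by linarith
  have hlogpos : 0 < Real.log (D d) := Real.log_pos (by linarith)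
  rw [Real.log_mul (by norm_num) hD0.ne']
  field_simp

lemma hT1 : Tendsto (fun d : ℕ => (2*D d/Real.log (D d)) * B d) atTop (𝓝 1) := by
  have hprod := ((hElim.mul hedl).mul hρinv).mul (hDfrac.mul hlog8)
  have hval : (1:ℝ)*1*1*(1*1) = 1 := by norm_num
  rw [hval] at hprod
  apply hprod.congr'
  filter_upwards [eventually_ge_atTop 10] with d hd
  have hD' := hD hd
  have hlogpos : 0 < Real.log (D d) := Real.log_pos (by linarith)
  have hρ0' := hρ0 hd (d := d)
  have hD1 : D d - 1 ≠ 0 := by linarith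
  unfold B c
  field_simp

lemma hT3 : Tendsto (fun d : ℕ => 2*D d/((2*D d - 1)*Real.log (D d))) atTop (𝓝 0) := by
  have h1 : Tendsto (fun d : ℕ => (2*D d - 1)) atTop atTop := by
    have h2 : Tendsto (fun d : ℕ => (2*D d)) atTop atTop :=
      Tendsto.const_mul_atTop two_pos hDtendsto
    exact tendsto_atTop_add_const_right atTop (-1) h2 |>.congr (fun d => by ring_nf)
  have hfrac : Tendsto (fun d : ℕ => 2*D d/(2*D d - 1)) atTop (𝓝 1) := by
    have h2 : Tendsto (fun d : ℕ => 1 + (2*D d - 1)⁻¹) atTop (𝓝 1) := by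
      have := (tendsto_const_nhds (x := (1:ℝ)) (f := atTop (α := ℕ))).add
        (tendsto_inv_atTop_zero.comp h1)
      simpa using this
    apply h2.congr'
    filter_upwards [eventually_ge_atTop 10] with d hd
    have hD' := hD hd
    have : (2*D d - 1) ≠ 0 := by linarith
    field_simp
    ring
  have := hfrac.mul (tendsto_inv_atTop_zero.comp hlogD)
  rw [show (1:ℝ)*0 = 0 by norm_num] at this
  apply this.congr'
  filter_upwards [] with d
  simp only [Function.comp]
  rw [mul_comm ((2:ℝ)*D d - 1) (Real.log (D d)), ← div_div, div_eq_mul_inv (2*D d)]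
  ring

lemma hhlim : Tendsto (fun d : ℕ => h d) atTop (𝓝 1) := by
  have hcomb := (hT1.mul hT1).add (hT1.mul hT3)
  rw [show (1:ℝ)*1 + 1*0 = 1 by norm_num] at hcomb
  apply hcomb.congr'
  filter_upwards [eventually_ge_atTop 10] with d hd
  have hD' := hD hd
  have hlogpos : 0 < Real.log (D d) := Real.log_pos (by linarith)
  have h2D : (2*D d - 1) ≠ 0 := by linarith
  unfold h
  field_simp

end
end Stmt9aux

theorem stmt9 :
    Filter.limsup (fun d : ℕ =>
        (2 * (d : ℝ) / Real.log d) ^ 2 *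
          (2 * ∑' k : ℕ,
            (1 / (((k : ℝ) + 1) +
                2 * ((d : ℝ) - 1) * ((k : ℝ) + 1) ^ (((d : ℝ) - 2) / ((d : ℝ) - 1)))) *
              ∑' m : ℕ, (1 - 1 / (2 * (d : ℝ))) ^ (k + m) /
                (((k : ℝ) + (m : ℝ) + 1) +
                  2 * ((d : ℝ) - 1) * ((k : ℝ) + (m : ℝ) + 1) ^ (((d : ℝ) - 2) / ((d : ℝ) - 1)))))
      atTop ≤ 1 := by
  have heq : (fun d : ℕ =>
        (2 * (d : ℝ) / Real.log d) ^ 2 *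
          (2 * ∑' k : ℕ,
            (1 / (((k : ℝ) + 1) +
                2 * ((d : ℝ) - 1) * ((k : ℝ) + 1) ^ (((d : ℝ) - 2) / ((d : ℝ) - 1)))) *
              ∑' m : ℕ, (1 - 1 / (2 * (d : ℝ))) ^ (k + m) /
                (((k : ℝ) + (m : ℝ) + 1) +
                  2 * ((d : ℝ) - 1) * ((k : ℝ) + (m : ℝ) + 1) ^ (((d : ℝ) - 2) / ((d : ℝ) - 1)))))
      = (fun d : ℕ => (2*Stmt9aux.D d/Real.log (Stmt9aux.D d))^2 *
          (2*(∑' k, (1/Stmt9aux.w d k) *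
            ∑' m, (Stmt9aux.A d)^(k+m)/Stmt9aux.w d (k+m)))) := by
    funext d
    simp only [Stmt9aux.D, Stmt9aux.A, Stmt9aux.w, Stmt9aux.pw]
    congr 2
    apply tsum_congr
    intro k
    congr 1
    apply tsum_congr
    intro m
    have hcast : ((k:ℝ) + (m:ℝ) + 1) = (((k+m : ℕ)):ℝ) + 1 := by push_cast; ring
    rw [hcast]
  rw [heq]
  have hbdd : IsBoundedUnder (· ≤ ·) atTop (fun d : ℕ => Stmt9aux.h d) :=
    Stmt9aux.hhlim.isBoundedUnder_le
  have hcob : IsCoboundedUnder (· ≤ ·) atTop (fun d : ℕ => (2*Stmt9aux.D d/Real.log (Stmt9aux.D d))^2 *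
      (2*(∑' k, (1/Stmt9aux.w d k) * ∑' m, (Stmt9aux.A d)^(k+m)/Stmt9aux.w d (k+m)))) := by
    apply isCoboundedUnder_le_of_eventually_le atTop (x := 0)
    filter_upwards [eventually_ge_atTop 10] with d hd
    exact Stmt9aux.hf_nonneg hd
  have hle : (fun d : ℕ => (2*Stmt9aux.D d/Real.log (Stmt9aux.D d))^2 *
      (2*(∑' k, (1/Stmt9aux.w d k) * ∑' m, (Stmt9aux.A d)^(k+m)/Stmt9aux.w d (k+m))))
      ≤ᶠ[atTop] (fun d : ℕ => Stmt9aux.h d) := by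
    filter_upwards [eventually_ge_atTop 10] with d hd
    exact Stmt9aux.hf_le_h hd
  calc Filter.limsup _ atTop ≤ Filter.limsup (fun d : ℕ => Stmt9aux.h d) atTop :=
        limsup_le_limsup hle hcob hbdd
    _ = 1 := Stmt9aux.hhlim.limsup_eq
end
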